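/- arXiv:1903.07267 — 5 statements merged into one kernel-verified Lean document; each statement's English description precedes it below -/
import Mathlib

section
/- In a finite directed graph, the maximum size of a (V1–V2)-linking (set of pairwise vertex-disjoint direct paths from V1 to V2) equals the minimum cardinality of a (V1,V2)-separator (Menger's theorem, vertex version between node sets). -/
/-- A direct (A–T)-path: a nonempty simple directed path whose first node is in `A`,
whose last node is in `T`, and which meets `A` only at its first node and `T` only
at its last node. -/
def DirectPath {V : Type} (E : V → V → Prop) (A T : Set V) (l : List V) : Prop :=
  l ≠ [] ∧ l.Chain' E ∧ l.Nodup ∧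
  (∃ a ∈ A, l.head? = some a) ∧
  (∃ b ∈ T, l.getLast? = some b) ∧
  (∀ v ∈ l, v ∈ A → l.head? = some v) ∧
  (∀ v ∈ l, v ∈ T → l.getLast? = some v)

/-- An (A–T)-linking of size `p`: `p` pairwise vertex-disjoint direct (A–T)-paths. -/
def Linking {V : Type} (E : V → V → Prop) (A T : Set V) (p : ℕ)
    (P : Fin p → List V) : Prop :=
  (∀ i, DirectPath E A T (P i)) ∧
  ∀ i j, i ≠ j → ∀ v, v ∈ P i → v ∉ P j

/-- An (A,T)-separator: a node set met by every directed path from `A` to `T`. -/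
def IsSeparator {V : Type} (E : V → V → Prop) (A T S : Set V) : Prop :=
  ∀ l : List V, l ≠ [] → l.Chain' E →
    (∃ a ∈ A, l.head? = some a) → (∃ b ∈ T, l.getLast? = some b) →
    ∃ v ∈ l, v ∈ S

namespace MengerAux
open List

set_option linter.unusedSectionVars false

variable {V : Type}

lemma getLast?_cons_ne_nil {a : V} {m : List V} (h : m ≠ []) :
    (a :: m).getLast? = m.getLast? := by
  cases m with
  | nil => exact absurd rfl h
  | cons b t => exact List.getLast?_cons_cons

/-- A nodup list whose head and last agree is a singleton. -/
lemma eq_singleton_of_head_last {l : List V} (hnd : l.Nodup) {s : V}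
    (h1 : l.head? = some s) (h2 : l.getLast? = some s) : l = [s] := by
  cases l with
  | nil => simp at h1
  | cons a t =>
    simp only [head?_cons, Option.some.injEq] at h1
    subst h1
    cases t with
    | nil => rfl
    | cons b u =>
      exfalso
      rw [List.getLast?_cons_cons, List.getLast?_eq_getLast (cons_ne_nil _ _)] at h2
      have : (b :: u).getLast (cons_ne_nil _ _) ∈ b :: u := List.getLast_mem _
      rw [Option.some.injEq] at h2
      rw [h2] at this
      exact (List.nodup_cons.mp hnd).1 this

/-- Truncate a chain at the first vertex lying in `B`. -/
lemma firstMem {E E₂ : V → V → Prop} {B : Set V}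
    (hE₂ : ∀ u w, E u w → u ∉ B → E₂ u w) :
    ∀ (l : List V), l ≠ [] → l.Chain' E → (∃ v ∈ l, v ∈ B) →
    ∃ m : List V, m ≠ [] ∧ m.Chain' E₂ ∧ m.head? = l.head? ∧
      (∃ b ∈ B, m.getLast? = some b) ∧ (∀ v ∈ m, v ∈ l) := by
  intro l
  induction l with
  | nil => simp
  | cons a t ih =>
    intro _ hc hm
    by_cases ha : a ∈ B
    · exact ⟨[a], cons_ne_nil _ _, isChain_singleton a, rfl, ⟨a, ha, rfl⟩, by simp⟩
    · have ht : ∃ v ∈ t, v ∈ B := by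
        obtain ⟨v, hv, hvB⟩ := hm
        rcases mem_cons.mp hv with rfl | h
        · exact absurd hvB ha
        · exact ⟨v, h, hvB⟩
      have htne : t ≠ [] := by rintro rfl; simp at ht
      obtain ⟨m', hm'ne, hm'c, hm'h, hm'l, hm'sub⟩ := ih htne hc.tail ht
      refine ⟨a :: m', cons_ne_nil _ _, ?_, rfl, ?_, ?_⟩
      · unfold List.Chain'; rw [isChain_cons]
        refine ⟨fun y hy => ?_, hm'c⟩
        rw [hm'h] at hy
        exact hE₂ a y ((isChain_cons.mp hc).1 y hy) ha
      · obtain ⟨b, hb, hbl⟩ := hm'l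
        exact ⟨b, hb, by rw [getLast?_cons_ne_nil hm'ne]; exact hbl⟩
      · intro v hv
        rcases mem_cons.mp hv with rfl | h
        · exact mem_cons_self
        · exact mem_cons_of_mem _ (hm'sub v h)

lemma chain'_imp_tail {E E₂ : V → V → Prop} {C : Set V}
    (hE₂ : ∀ u w, E u w → w ∉ C → E₂ u w) :
    ∀ (l : List V), l.Chain' E → (∀ v ∈ l.tail, v ∉ C) → l.Chain' E₂ := by
  intro l
  induction l with
  | nil => intro _ _; exact isChain_nil
  | cons a t ih =>
    intro hc hC
    cases t with
    | nil => exact isChain_singleton a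
    | cons b u =>
      unfold List.Chain' at hc ⊢; rw [isChain_cons_cons] at hc ⊢
      refine ⟨hE₂ a b hc.1 (hC b (mem_cons_self)), ?_⟩
      exact ih hc.2 (fun v hv => hC v (mem_cons_of_mem _ hv))

/-- Truncate a chain at the last vertex lying in `C`. -/
lemma lastMem {E E₂ : V → V → Prop} {C : Set V}
    (hE₂ : ∀ u w, E u w → w ∉ C → E₂ u w) :
    ∀ (l : List V), l ≠ [] → l.Chain' E → (∃ v ∈ l, v ∈ C) →
    ∃ m : List V, m ≠ [] ∧ m.Chain' E₂ ∧ m.getLast? = l.getLast? ∧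
      (∃ c ∈ C, m.head? = some c) ∧ (∀ v ∈ m, v ∈ l) := by
  intro l
  induction l with
  | nil => simp
  | cons a t ih =>
    intro _ hc hm
    by_cases ht : ∃ v ∈ t, v ∈ C
    · have htne : t ≠ [] := by rintro rfl; simp at ht
      obtain ⟨m', hm'ne, hm'c, hm'l, hm'h, hm'sub⟩ := ih htne hc.tail ht
      refine ⟨m', hm'ne, hm'c, ?_, hm'h, fun v hv => mem_cons_of_mem _ (hm'sub v hv)⟩
      rw [hm'l, getLast?_cons_ne_nil htne]
    · have haC : a ∈ C := by
        obtain ⟨v, hv, hvC⟩ := hm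
        rcases mem_cons.mp hv with rfl | h
        · exact hvC
        · exact absurd ⟨v, h, hvC⟩ ht
      push_neg at ht
      refine ⟨a :: t, cons_ne_nil _ _, ?_, rfl, ⟨a, haC, rfl⟩, fun v hv => hv⟩
      exact chain'_imp_tail hE₂ _ hc ht

/-- A chain in `E` either avoids the pair `(x, y)` everywhere or contains both. -/
lemma chain'_sub_or {E : V → V → Prop} {x y : V} :
    ∀ (l : List V), l.Chain' E →
      l.Chain' (fun u w => E u w ∧ ¬(u = x ∧ w = y)) ∨ (x ∈ l ∧ y ∈ l) := by
  intro l
  induction l with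
  | nil => intro _; exact Or.inl isChain_nil
  | cons a t ih =>
    intro hc
    cases t with
    | nil => exact Or.inl (isChain_singleton a)
    | cons b u =>
      unfold List.Chain' at hc; rw [isChain_cons_cons] at hc
      by_cases hab : a = x ∧ b = y
      · right
        exact ⟨by simp [hab.1], by simp [hab.2]⟩
      · rcases ih hc.2 with h | h
        · exact Or.inl (isChain_cons_cons.mpr ⟨⟨hc.1, hab⟩, h⟩)
        · exact Or.inr ⟨mem_cons_of_mem _ h.1, mem_cons_of_mem _ h.2⟩


lemma eq_cons_of_head? {l : List V} {a : V} (h : l.head? = some a) :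
    l = a :: l.tail := by
  cases l with
  | nil => simp at h
  | cons b t => simp only [head?_cons, Option.some.injEq] at h; subst h; rfl

lemma getLast?_append_right {l₁ l₂ : List V} (h : l₂ ≠ []) :
    (l₁ ++ l₂).getLast? = l₂.getLast? := by
  rw [List.getLast?_append, l₂.getLast?_eq_getLast h]
  rfl

lemma head?_append_left {l₁ l₂ : List V} (h : l₁ ≠ []) :
    (l₁ ++ l₂).head? = l₁.head? := by
  rw [List.head?_append, List.head?_eq_head h]
  rfl

/-- Split a nodup list as a prefix ending at `v`; the last element of `l`
belongs to the prefix only if it equals `v`. -/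
lemma prefixAt {l : List V} (hnd : l.Nodup) {v : V} (hv : v ∈ l) :
    ∃ m : List V, m.head? = l.head? ∧ m <+: l ∧ m.getLast? = some v ∧
      (∀ s, l.getLast? = some s → s ∈ m → v = s) := by
  obtain ⟨l₁, l₂, rfl⟩ := List.append_of_mem hv
  refine ⟨l₁ ++ [v], by rw [List.head?_append, List.head?_append]; rfl, ⟨l₂, by simp⟩,
    List.getLast?_concat, ?_⟩
  intro s hs hsm
  rcases eq_or_ne l₂ [] with rfl | hl₂
  · rw [show l₁ ++ v :: [] = l₁ ++ [v] from rfl, List.getLast?_concat] at hs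
    exact Option.some_injective _ hs
  · exfalso
    have h1 : (l₁ ++ v :: l₂).getLast? = l₂.getLast? := by
      rw [show l₁ ++ v :: l₂ = (l₁ ++ [v]) ++ l₂ by simp]
      exact getLast?_append_right hl₂
    have hs₂ : s ∈ l₂ := List.mem_of_mem_getLast?
      (show s ∈ l₂.getLast? from Option.mem_def.mpr (h1.symm.trans hs))
    rw [List.nodup_append] at hnd
    rcases List.mem_append.mp hsm with h | h
    · exact hnd.2.2 _ h _ (mem_cons_of_mem _ hs₂) rfl
    · have : s = v := by simpa using h
      subst this
      exact (List.nodup_cons.mp hnd.2.1).1 hs₂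

/-- Split a nodup list as a suffix starting at `v`; the head of `l`
belongs to the suffix only if it equals `v`. -/
lemma suffixAt {l : List V} (hnd : l.Nodup) {v : V} (hv : v ∈ l) :
    ∃ m : List V, m.getLast? = l.getLast? ∧ m <:+ l ∧ m.head? = some v ∧
      (∀ s, l.head? = some s → s ∈ m → v = s) := by
  obtain ⟨l₁, l₂, rfl⟩ := List.append_of_mem hv
  refine ⟨v :: l₂, (getLast?_append_right (cons_ne_nil _ _)).symm, ⟨l₁, rfl⟩, rfl, ?_⟩
  intro s hs hsm
  rcases eq_or_ne l₁ [] with rfl | hl₁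
  · simp only [nil_append, head?_cons, Option.some.injEq] at hs
    exact hs
  · exfalso
    have hs₁ : s ∈ l₁ := List.mem_of_mem_head?
      (show s ∈ l₁.head? from Option.mem_def.mpr ((head?_append_left hl₁).symm.trans hs))
    rw [List.nodup_append] at hnd
    exact hnd.2.2 _ hs₁ _ hsm rfl


/-- Glue two walks sharing endpoint `v`, dropping the duplicate. -/
lemma glueWalk {E : V → V → Prop} {m₁ m₂ : List V} {v : V}
    (h₁ : m₁.getLast? = some v) (h₂ : m₂.head? = some v)
    (c₁ : m₁.Chain' E) (c₂ : m₂.Chain' E) :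
    (m₁ ++ m₂.tail).Chain' E ∧ (m₁ ++ m₂.tail).head? = m₁.head? ∧
      (m₁ ++ m₂.tail).getLast? = m₂.getLast? := by
  have hm₁ne : m₁ ≠ [] := by intro h; rw [h] at h₁; simp at h₁
  have hm₂ : m₂ = v :: m₂.tail := eq_cons_of_head? h₂
  refine ⟨?_, head?_append_left hm₁ne, ?_⟩
  · unfold List.Chain'; rw [isChain_append]
    refine ⟨c₁, c₂.tail, ?_⟩
    intro a ha b hb
    rw [h₁] at ha
    have hva : a = v := (show v = a by simpa using ha).symm
    subst hva
    have hc := c₂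
    unfold List.Chain' at hc; rw [hm₂, isChain_cons] at hc
    exact hc.1 b hb
  · rcases eq_or_ne m₂.tail [] with htail | htail
    · rw [htail, append_nil, h₁]
      conv_rhs => rw [hm₂, htail]
      rfl
    · rw [getLast?_append_right htail]
      conv_rhs => rw [hm₂]
      rw [getLast?_cons_ne_nil htail]

/-- Glue two walks joined by an edge. -/
lemma glueWalk2 {E : V → V → Prop} {m₁ m₂ : List V} {u w : V}
    (h₁ : m₁.getLast? = some u) (h₂ : m₂.head? = some w) (he : E u w)
    (c₁ : m₁.Chain' E) (c₂ : m₂.Chain' E) :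
    (m₁ ++ m₂).Chain' E ∧ (m₁ ++ m₂).head? = m₁.head? ∧
      (m₁ ++ m₂).getLast? = m₂.getLast? := by
  have hm₁ne : m₁ ≠ [] := by intro h; rw [h] at h₁; simp at h₁
  have hm₂ne : m₂ ≠ [] := by intro h; rw [h] at h₂; simp at h₂
  refine ⟨?_, head?_append_left hm₁ne, getLast?_append_right hm₂ne⟩
  unfold List.Chain'; rw [isChain_append]
  refine ⟨c₁, c₂, ?_⟩
  intro a ha b hb
  rw [h₁] at ha; rw [h₂] at hb
  have : a = u := (show u = a by simpa using ha).symm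
  have hb' : b = w := (show w = b by simpa using hb).symm
  subst this; subst hb'
  exact he

variable [Fintype V] [DecidableEq V]

/-- The set of cardinalities of separators. -/
def sepSizes (E : V → V → Prop) (A T : Set V) : Set ℕ :=
  {n | ∃ S : Finset V, IsSeparator E A T ↑S ∧ S.card = n}

lemma univ_isSeparator (E : V → V → Prop) (A T : Set V) :
    IsSeparator E A T ↑(Finset.univ : Finset V) := by
  intro l hne _ _ _
  cases l with
  | nil => exact absurd rfl hne
  | cons a t => exact ⟨a, mem_cons_self, by simp⟩

lemma sepSizes_nonempty (E : V → V → Prop) (A T : Set V) :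
    (sepSizes E A T).Nonempty :=
  ⟨(Finset.univ : Finset V).card, Finset.univ, univ_isSeparator E A T, rfl⟩

/-- The minimum cardinality of a separator. -/
noncomputable def minSep (E : V → V → Prop) (A T : Set V) : ℕ :=
  sInf (sepSizes E A T)

lemma exists_minSep_sep (E : V → V → Prop) (A T : Set V) :
    ∃ S : Finset V, IsSeparator E A T ↑S ∧ S.card = minSep E A T :=
  Nat.sInf_mem (sepSizes_nonempty E A T)

lemma minSep_le {E : V → V → Prop} {A T : Set V} {S : Finset V}
    (h : IsSeparator E A T ↑S) : minSep E A T ≤ S.card :=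
  Nat.sInf_le ⟨S, h, rfl⟩

lemma linking_le {E : V → V → Prop} {A T : Set V} {q : ℕ} {P : Fin q → List V}
    {S : Finset V} (hL : Linking E A T q P) (hS : IsSeparator E A T ↑S) :
    q ≤ S.card := by
  have hmeets : ∀ i : Fin q, ∃ v ∈ P i, v ∈ S := by
    intro i
    obtain ⟨hne, hc, _, hA, hT, _, _⟩ := hL.1 i
    exact hS (P i) hne hc hA hT
  choose f hf1 hf2 using hmeets
  have hinj : Function.Injective fun i => (⟨f i, hf2 i⟩ : {x // x ∈ S}) := by
    intro i j hij
    by_contra hne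
    have hfeq : f i = f j := congrArg Subtype.val hij
    exact hL.2 i j hne (f i) (hf1 i) (hfeq ▸ hf1 j)
  calc q = Fintype.card (Fin q) := (Fintype.card_fin q).symm
    _ ≤ Fintype.card {x // x ∈ S} := Fintype.card_le_of_injective _ hinj
    _ = S.card := Fintype.card_coe S

lemma Linking.mono {E E' : V → V → Prop} {A T : Set V} {q : ℕ} {P : Fin q → List V}
    (h : ∀ u w, E u w → E' u w) (hL : Linking E A T q P) : Linking E' A T q P := by
  refine ⟨fun i => ?_, hL.2⟩
  obtain ⟨h1, h2, h3, h4, h5, h6, h7⟩ := hL.1 i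
  exact ⟨h1, h2.imp h, h3, h4, h5, h6, h7⟩

lemma Linking.restrict {E : V → V → Prop} {A T : Set V} {q k : ℕ} {P : Fin q → List V}
    (h : k ≤ q) (hL : Linking E A T q P) : Linking E A T k (P ∘ Fin.castLE h) := by
  refine ⟨fun i => hL.1 _, fun i j hij v hv => ?_⟩
  exact hL.2 _ _ (fun hc => hij (Fin.castLE_injective h hc)) v hv

/-- Base case: if all edges are loops, every A–T walk meets `A ∩ T`. -/
lemma loops_walk {E : V → V → Prop} (hE : ∀ x y, E x y → x = y) {A T : Set V} :
    ∀ (l : List V), l ≠ [] → l.Chain' E →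
      (∃ a ∈ A, l.head? = some a) → (∃ b ∈ T, l.getLast? = some b) →
      ∃ v ∈ l, v ∈ A ∩ T := by
  intro l
  induction l with
  | nil => simp
  | cons a t ih =>
    intro _ hc hA hT
    cases t with
    | nil =>
      obtain ⟨a', ha', h1⟩ := hA
      obtain ⟨b', hb', h2⟩ := hT
      simp only [head?_cons, Option.some.injEq] at h1
      simp only [getLast?_singleton, Option.some.injEq] at h2
      subst h1; subst h2
      exact ⟨a, mem_cons_self, ha', hb'⟩
    | cons b u =>
      unfold List.Chain' at hc; rw [isChain_cons_cons] at hc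
      have hab : a = b := hE a b hc.1
      subst hab
      obtain ⟨a', ha', h1⟩ := hA
      simp only [head?_cons, Option.some.injEq] at h1
      subst h1
      obtain ⟨v, hv, hvAT⟩ := ih (cons_ne_nil _ _) hc.2
        ⟨a, ha', rfl⟩
        (by rw [List.getLast?_cons_cons] at hT; exact hT)
      exact ⟨v, mem_cons_of_mem _ hv, hvAT⟩


/-- Base case of the induction: all edges are loops. -/
lemma base {E : V → V → Prop} (hE : ∀ x y, E x y → x = y) (A T : Set V) :
    ∃ P : Fin (minSep E A T) → List V, Linking E A T (minSep E A T) P := by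
  set F : Finset V := (Set.toFinite (A ∩ T)).toFinset with hFdef
  have hFcoe : (↑F : Set V) = A ∩ T := Set.Finite.coe_toFinset _
  have hsep : IsSeparator E A T ↑F := by
    intro l h1 h2 h3 h4
    obtain ⟨v, hv, hvAT⟩ := loops_walk hE l h1 h2 h3 h4
    exact ⟨v, hv, by rw [hFcoe]; exact hvAT⟩
  have hk : minSep E A T ≤ F.card := minSep_le hsep
  have hlen : F.toList.length = F.card := Finset.length_toList F
  have hmem : ∀ (i : ℕ) (h : i < F.toList.length), F.toList.get ⟨i, h⟩ ∈ A ∩ T := by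
    intro i h
    have : F.toList.get ⟨i, h⟩ ∈ F.toList := F.toList.get_mem ⟨i, h⟩
    rw [Finset.mem_toList] at this
    rw [← hFcoe]
    exact this
  refine ⟨fun i => [F.toList.get ⟨i.1, by rw [hlen]; exact lt_of_lt_of_le i.2 hk⟩],
    fun i => ?_, fun i j hij v hv hv' => ?_⟩
  · have hlt : (i : ℕ) < F.toList.length := by rw [hlen]; exact lt_of_lt_of_le i.2 hk
    have hvAT := hmem i.1 hlt
    exact ⟨cons_ne_nil _ _, isChain_singleton _, by simp, ⟨_, hvAT.1, rfl⟩,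
      ⟨_, hvAT.2, rfl⟩,
      fun w hw _ => by simp only [mem_singleton] at hw; subst hw; rfl,
      fun w hw _ => by simp only [mem_singleton] at hw; subst hw; rfl⟩
  · simp only [mem_singleton] at hv hv'
    subst hv
    have := (List.Nodup.get_inj_iff (Finset.nodup_toList F)).mp hv'.symm
    apply hij
    have h2 := congrArg Fin.val this
    simp only at h2
    exact Fin.ext h2.symm



theorem core : ∀ (n : ℕ) (E : V → V → Prop), {p : V × V | E p.1 p.2}.ncard ≤ n →
    ∀ A T : Set V, ∃ P : Fin (minSep E A T) → List V, Linking E A T (minSep E A T) P := by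
  intro n
  induction n with
  | zero =>
    intro E hE A T
    refine base (fun x y hxy => ?_) A T
    exfalso
    have hempty : {p : V × V | E p.1 p.2} = ∅ :=
      (Set.ncard_eq_zero (Set.toFinite _)).mp (Nat.le_zero.mp hE)
    have : (x, y) ∈ {p : V × V | E p.1 p.2} := hxy
    rw [hempty] at this
    exact this
  | succ n ih =>
    intro E hE A T
    by_cases hloop : ∀ x y, E x y → x = y
    · exact base hloop A T
    push_neg at hloop
    obtain ⟨x, y, hxy, hxyne⟩ := hloop
    set k := minSep E A T with hkdef
    set E' : V → V → Prop := fun u w => E u w ∧ ¬(u = x ∧ w = y) with hE'def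
    have hE'sub : ∀ u w, E' u w → E u w := fun u w h => h.1
    have hcard : {p : V × V | E' p.1 p.2}.ncard ≤ n := by
      have hss : {p : V × V | E' p.1 p.2} ⊂ {p : V × V | E p.1 p.2} := by
        refine ⟨fun p hp => hp.1, fun hsub => ?_⟩
        have h1 : (x, y) ∈ {p : V × V | E p.1 p.2} := hxy
        have h2 := hsub h1
        exact h2.2 ⟨rfl, rfl⟩
      have := Set.ncard_lt_ncard hss (Set.toFinite _)
      omega
    by_cases hge : k ≤ minSep E' A T
    · obtain ⟨P', hP'⟩ := ih E' hcard A T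
      exact ⟨_, Linking.restrict hge (Linking.mono hE'sub hP')⟩
    push_neg at hge
    obtain ⟨S₀, hS₀sep, hS₀card⟩ := exists_minSep_sep E' A T
    have hS₀lt : S₀.card < k := by rw [hS₀card]; exact hge
    set B : Finset V := S₀ ∪ {x} with hBdef
    set C : Finset V := S₀ ∪ {y} with hCdef
    have hSB : ∀ v ∈ S₀, v ∈ B := fun v hv => Finset.mem_union_left _ hv
    have hxB : x ∈ B := Finset.mem_union_right _ (Finset.mem_singleton_self x)
    have hSC : ∀ v ∈ S₀, v ∈ C := fun v hv => Finset.mem_union_left _ hv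
    have hyC : y ∈ C := Finset.mem_union_right _ (Finset.mem_singleton_self y)
    -- B and C are (A,T)-separators for E
    have hsepB : IsSeparator E A T ↑B := by
      intro l h1 h2 h3 h4
      rcases chain'_sub_or (x := x) (y := y) l h2 with h | h
      · obtain ⟨v, hv, hvS⟩ := hS₀sep l h1 h h3 h4
        exact ⟨v, hv, Finset.mem_coe.mpr (hSB v (Finset.mem_coe.mp hvS))⟩
      · exact ⟨x, h.1, Finset.mem_coe.mpr hxB⟩
    have hsepC : IsSeparator E A T ↑C := by
      intro l h1 h2 h3 h4
      rcases chain'_sub_or (x := x) (y := y) l h2 with h | h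
      · obtain ⟨v, hv, hvS⟩ := hS₀sep l h1 h h3 h4
        exact ⟨v, hv, Finset.mem_coe.mpr (hSC v (Finset.mem_coe.mp hvS))⟩
      · exact ⟨y, h.2, Finset.mem_coe.mpr hyC⟩
    have hkB : k ≤ B.card := minSep_le hsepB
    have hkC : k ≤ C.card := minSep_le hsepC
    have hxS₀ : x ∉ S₀ := by
      intro hx
      have hBS : B = S₀ := Finset.union_eq_left.mpr (Finset.singleton_subset_iff.mpr hx)
      rw [hBS] at hkB; omega
    have hyS₀ : y ∉ S₀ := by
      intro hy
      have hCS : C = S₀ := Finset.union_eq_left.mpr (Finset.singleton_subset_iff.mpr hy)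
      rw [hCS] at hkC; omega
    have hBcard : B.card = k := by
      have h1 : B.card ≤ S₀.card + 1 := by
        have h0 := Finset.card_union_le S₀ {x}
        rw [Finset.card_singleton] at h0
        exact h0
      omega
    have hCcard : C.card = k := by
      have h1 : C.card ≤ S₀.card + 1 := by
        have h0 := Finset.card_union_le S₀ {y}
        rw [Finset.card_singleton] at h0
        exact h0
      omega
    -- key: transferring separators
    have hBk : k ≤ minSep E' A ↑B := by
      obtain ⟨R, hRsep, hRcard⟩ := exists_minSep_sep E' A ↑B
      rw [← hRcard]
      refine minSep_le ?_
      intro l h1 h2 h3 h4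
      have hmB : ∃ v ∈ l, v ∈ (↑B : Set V) := by
        rcases chain'_sub_or (x := x) (y := y) l h2 with h | h
        · obtain ⟨v, hv, hvS⟩ := hS₀sep l h1 h h3 h4
          exact ⟨v, hv, Finset.mem_coe.mpr (hSB v (Finset.mem_coe.mp hvS))⟩
        · exact ⟨x, h.1, Finset.mem_coe.mpr hxB⟩
      obtain ⟨m, hm1, hm2, hm3, hm4, hm5⟩ :=
        firstMem (E := E) (E₂ := E') (B := ↑B)
          (fun u w he hu => ⟨he, fun hp => hu (by rw [hp.1]; exact Finset.mem_coe.mpr hxB)⟩)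
          l h1 h2 hmB
      obtain ⟨a, ha, hal⟩ := h3
      obtain ⟨v, hv, hvR⟩ := hRsep m hm1 hm2 ⟨a, ha, by rw [hm3]; exact hal⟩ hm4
      exact ⟨v, hm5 v hv, hvR⟩
    have hCk : k ≤ minSep E' ↑C T := by
      obtain ⟨R, hRsep, hRcard⟩ := exists_minSep_sep E' ↑C T
      rw [← hRcard]
      refine minSep_le ?_
      intro l h1 h2 h3 h4
      have hmC : ∃ v ∈ l, v ∈ (↑C : Set V) := by
        rcases chain'_sub_or (x := x) (y := y) l h2 with h | h
        · obtain ⟨v, hv, hvS⟩ := hS₀sep l h1 h h3 h4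
          exact ⟨v, hv, Finset.mem_coe.mpr (hSC v (Finset.mem_coe.mp hvS))⟩
        · exact ⟨y, h.2, Finset.mem_coe.mpr hyC⟩
      obtain ⟨m, hm1, hm2, hm3, hm4, hm5⟩ :=
        lastMem (E := E) (E₂ := E') (C := ↑C)
          (fun u w he hw => ⟨he, fun hp => hw (by rw [hp.2]; exact Finset.mem_coe.mpr hyC)⟩)
          l h1 h2 hmC
      obtain ⟨b, hb, hbl⟩ := h4
      obtain ⟨v, hv, hvR⟩ := hRsep m hm1 hm2 hm4 ⟨b, hb, by rw [hm3]; exact hbl⟩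
      exact ⟨v, hm5 v hv, hvR⟩
    -- the two linkings from the induction hypothesis
    obtain ⟨PB0, hPB0⟩ := ih E' hcard A ↑B
    obtain ⟨PC0, hPC0⟩ := ih E' hcard ↑C T
    set PB : Fin k → List V := PB0 ∘ Fin.castLE hBk with hPBdef
    set PC : Fin k → List V := PC0 ∘ Fin.castLE hCk with hPCdef
    have hPB : Linking E' A ↑B k PB := Linking.restrict hBk hPB0
    have hPC : Linking E' ↑C T k PC := Linking.restrict hCk hPC0
    -- endpoints
    set lsB : Fin k → V := fun i => ((PB i).getLast?).getD x with hlsBdef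
    set hdC : Fin k → V := fun j => ((PC j).head?).getD x with hhdCdef
    have hlsB : ∀ i, (PB i).getLast? = some (lsB i) ∧ lsB i ∈ B := by
      intro i
      obtain ⟨_, _, _, _, ⟨b, hb, hbl⟩, _, _⟩ := hPB.1 i
      have : lsB i = b := by rw [hlsBdef]; simp only [hbl, Option.getD_some]
      rw [this, hbl]
      exact ⟨rfl, Finset.mem_coe.mp hb⟩
    have hhdC : ∀ j, (PC j).head? = some (hdC j) ∧ hdC j ∈ C := by
      intro j
      obtain ⟨_, _, _, ⟨c, hc, hcl⟩, _, _, _⟩ := hPC.1 j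
      have : hdC j = c := by rw [hhdCdef]; simp only [hcl, Option.getD_some]
      rw [this, hcl]
      exact ⟨rfl, Finset.mem_coe.mp hc⟩
    have hlsB_mem : ∀ i, lsB i ∈ PB i :=
      fun i => List.mem_of_mem_getLast? (Option.mem_def.mpr (hlsB i).1)
    have hhdC_mem : ∀ j, hdC j ∈ PC j :=
      fun j => List.mem_of_mem_head? (Option.mem_def.mpr (hhdC j).1)
    have hlsB_inj : Function.Injective lsB := by
      intro i j hij
      by_contra hne
      have h2 : lsB i ∈ PB j := by rw [hij]; exact hlsB_mem j
      exact hPB.2 i j hne (lsB i) (hlsB_mem i) h2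
    have hhdC_inj : Function.Injective hdC := by
      intro i j hij
      by_contra hne
      have h2 : hdC i ∈ PC j := by rw [hij]; exact hhdC_mem j
      exact hPC.2 i j hne (hdC i) (hhdC_mem i) h2
    -- the endpoint maps are surjective onto B resp. C
    have himgB : ∀ b ∈ B, ∃ i, lsB i = b := by
      intro b hb
      have h1 : (Finset.univ.image lsB) = B := by
        apply Finset.eq_of_subset_of_card_le
        · intro v hv
          obtain ⟨i, _, rfl⟩ := Finset.mem_image.mp hv
          exact (hlsB i).2
        · rw [Finset.card_image_of_injective _ hlsB_inj, Finset.card_univ, Fintype.card_fin]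
          exact le_of_eq hBcard
      rw [← h1] at hb
      obtain ⟨i, _, hi⟩ := Finset.mem_image.mp hb
      exact ⟨i, hi⟩
    have himgC : ∀ c ∈ C, ∃ j, hdC j = c := by
      intro c hc
      have h1 : (Finset.univ.image hdC) = C := by
        apply Finset.eq_of_subset_of_card_le
        · intro v hv
          obtain ⟨j, _, rfl⟩ := Finset.mem_image.mp hv
          exact (hhdC j).2
        · rw [Finset.card_image_of_injective _ hhdC_inj, Finset.card_univ, Fintype.card_fin]
          exact le_of_eq hCcard
      rw [← h1] at hc
      obtain ⟨j, _, hj⟩ := Finset.mem_image.mp hc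
      exact ⟨j, hj⟩
    -- B- (resp. C-) vertices on the paths are only the endpoints
    have hBonly : ∀ i v, v ∈ PB i → v ∈ B → v = lsB i := by
      intro i v hv hvB
      obtain ⟨_, _, _, _, _, _, hTonly⟩ := hPB.1 i
      have := hTonly v hv (Finset.mem_coe.mpr hvB)
      rw [(hlsB i).1] at this
      exact (Option.some_injective _ this.symm)
    have hConly : ∀ j v, v ∈ PC j → v ∈ C → v = hdC j := by
      intro j v hv hvC
      obtain ⟨_, _, _, _, _, hAonly, _⟩ := hPC.1 j
      have := hAonly v hv (Finset.mem_coe.mpr hvC)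
      rw [(hhdC j).1] at this
      exact (Option.some_injective _ this.symm)
    -- the S₀-avoidance machine
    have noWalk : ∀ (m : List V), m ≠ [] → m.Chain' E' →
        (∃ a ∈ A, m.head? = some a) → (∃ b ∈ T, m.getLast? = some b) →
        (∀ v ∈ m, v ∉ S₀) → False := by
      intro m h1 h2 h3 h4 h5
      obtain ⟨v, hv, hvS⟩ := hS₀sep m h1 h2 h3 h4
      exact h5 v hv (Finset.mem_coe.mp hvS)
    -- (a): a T-vertex on a PB-path is its endpoint and lies in S₀
    have hT_B : ∀ i v, v ∈ PB i → v ∈ T → v = lsB i ∧ v ∈ S₀ := by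
      intro i v hv hvT
      obtain ⟨hne, hch, hnd, hA, -, -, -⟩ := hPB.1 i
      obtain ⟨m, hmh, hmpre, hml, hmlast⟩ := prefixAt hnd hv
      have hmne : m ≠ [] := by intro h; rw [h] at hml; simp at hml
      have hmch : m.Chain' E' := hch.prefix hmpre
      obtain ⟨a, ha, hal⟩ := hA
      obtain ⟨w, hwm, hwS⟩ := hS₀sep m hmne hmch ⟨a, ha, by rw [hmh]; exact hal⟩ ⟨v, hvT, hml⟩
      have hwS' : w ∈ S₀ := Finset.mem_coe.mp hwS
      have hw : w = lsB i := hBonly i w (hmpre.subset hwm) (hSB w hwS')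
      have hveq : v = lsB i := hmlast (lsB i) (hlsB i).1 (by rw [← hw]; exact hwm)
      exact ⟨hveq, by rw [hveq, ← hw]; exact hwS'⟩
    -- (a'): an A-vertex on a PC-path is its start and lies in S₀
    have hA_C : ∀ j v, v ∈ PC j → v ∈ A → v = hdC j ∧ v ∈ S₀ := by
      intro j v hv hvA
      obtain ⟨hne, hch, hnd, -, hT, -, -⟩ := hPC.1 j
      obtain ⟨m, hml, hmsuf, hmh, hmhead⟩ := suffixAt hnd hv
      have hmne : m ≠ [] := by intro h; rw [h] at hmh; simp at hmh
      have hmch : m.Chain' E' := hch.suffix hmsuf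
      obtain ⟨b, hb, hbl⟩ := hT
      obtain ⟨w, hwm, hwS⟩ := hS₀sep m hmne hmch ⟨v, hvA, hmh⟩ ⟨b, hb, by rw [hml]; exact hbl⟩
      have hwS' : w ∈ S₀ := Finset.mem_coe.mp hwS
      have hw : w = hdC j := hConly j w (hmsuf.subset hwm) (hSC w hwS')
      have hveq : v = hdC j := hmhead (hdC j) (hhdC j).1 (by rw [← hw]; exact hwm)
      exact ⟨hveq, by rw [hveq, ← hw]; exact hwS'⟩
    -- (b): a common vertex of a PB- and a PC-path is the shared S₀-endpoint
    have hcross : ∀ i j v, v ∈ PB i → v ∈ PC j → v = lsB i ∧ v = hdC j ∧ v ∈ S₀ := by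
      intro i j v hvB hvC
      obtain ⟨hneB, hchB, hndB, hAB, -, -, -⟩ := hPB.1 i
      obtain ⟨hneC, hchC, hndC, -, hTC, -, -⟩ := hPC.1 j
      obtain ⟨m₁, hm1h, hm1pre, hm1l, hm1last⟩ := prefixAt hndB hvB
      obtain ⟨m₂, hm2l, hm2suf, hm2h, hm2head⟩ := suffixAt hndC hvC
      have hc1 : m₁.Chain' E' := hchB.prefix hm1pre
      have hc2 : m₂.Chain' E' := hchC.suffix hm2suf
      obtain ⟨hwch, hwh, hwl⟩ := glueWalk hm1l hm2h hc1 hc2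
      have hwne : m₁ ++ m₂.tail ≠ [] := by
        intro h
        have h0 : m₁ = [] := (List.append_eq_nil_iff.mp h).1
        rw [h0] at hm1l; simp at hm1l
      obtain ⟨a, ha, hal⟩ := hAB
      obtain ⟨b, hb, hbl⟩ := hTC
      obtain ⟨w, hwm, hwS⟩ := hS₀sep _ hwne hwch
        ⟨a, ha, by rw [hwh, hm1h]; exact hal⟩ ⟨b, hb, by rw [hwl, hm2l]; exact hbl⟩
      have hwS' : w ∈ S₀ := Finset.mem_coe.mp hwS
      rcases List.mem_append.mp hwm with hw1 | hw2
      · have hw : w = lsB i := hBonly i w (hm1pre.subset hw1) (hSB w hwS')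
        have h1 : v = lsB i := hm1last (lsB i) (hlsB i).1 (by rw [← hw]; exact hw1)
        have hvS : v ∈ S₀ := by rw [h1, ← hw]; exact hwS'
        exact ⟨h1, hConly j v hvC (hSC v hvS), hvS⟩
      · have hw2' : w ∈ m₂ := by
          rw [eq_cons_of_head? hm2h]; exact mem_cons_of_mem _ hw2
        have hw : w = hdC j := hConly j w (hm2suf.subset hw2') (hSC w hwS')
        have h1 : v = hdC j := hm2head (hdC j) (hhdC j).1 (by rw [← hw]; exact hw2')
        have hvS : v ∈ S₀ := by rw [h1, ← hw]; exact hwS'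
        exact ⟨hBonly i v hvB (hSB v hvS), h1, hvS⟩
    -- (c): x lies on no PC-path
    have hxPC : ∀ j, x ∉ PC j := by
      intro j hx
      obtain ⟨i₀, hi₀⟩ := himgB x hxB
      obtain ⟨hneB, hchB, -, hAB, -, -, -⟩ := hPB.1 i₀
      obtain ⟨hneC, hchC, hndC, -, hTC, -, -⟩ := hPC.1 j
      obtain ⟨m₂, hm2l, hm2suf, hm2h, hm2head⟩ := suffixAt hndC hx
      have hc2 : m₂.Chain' E' := hchC.suffix hm2suf
      have hlast : (PB i₀).getLast? = some x := by rw [(hlsB i₀).1, hi₀]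
      obtain ⟨hwch, hwh, hwl⟩ := glueWalk hlast hm2h hchB hc2
      obtain ⟨a, ha, hal⟩ := hAB
      obtain ⟨b, hb, hbl⟩ := hTC
      refine noWalk _ ?_ hwch ⟨a, ha, by rw [hwh]; exact hal⟩
        ⟨b, hb, by rw [hwl, hm2l]; exact hbl⟩ ?_
      · intro h
        exact hneB (List.append_eq_nil_iff.mp h).1
      · intro v hv hvS
        rcases List.mem_append.mp hv with h1 | h2
        · have hveq := hBonly i₀ v h1 (hSB v hvS)
          rw [hi₀] at hveq
          exact hxS₀ (by rw [← hveq]; exact hvS)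
        · have hv2 : v ∈ m₂ := by
            rw [eq_cons_of_head? hm2h]; exact mem_cons_of_mem _ h2
          have hveq : v = hdC j := hConly j v (hm2suf.subset hv2) (hSC v hvS)
          have hxh : x = hdC j := hm2head (hdC j) (hhdC j).1 (by rw [← hveq]; exact hv2)
          exact hxS₀ (by rw [hxh, ← hveq]; exact hvS)
    -- (c'): y lies on no PB-path
    have hyPB : ∀ i, y ∉ PB i := by
      intro i hy
      obtain ⟨j₀, hj₀⟩ := himgC y hyC
      obtain ⟨hneB, hchB, hndB, hAB, -, -, -⟩ := hPB.1 i
      obtain ⟨hneC, hchC, -, -, hTC, -, -⟩ := hPC.1 j₀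
      obtain ⟨m₁, hm1h, hm1pre, hm1l, hm1last⟩ := prefixAt hndB hy
      have hc1 : m₁.Chain' E' := hchB.prefix hm1pre
      have hhead : (PC j₀).head? = some y := by rw [(hhdC j₀).1, hj₀]
      obtain ⟨hwch, hwh, hwl⟩ := glueWalk hm1l hhead hc1 hchC
      obtain ⟨a, ha, hal⟩ := hAB
      obtain ⟨b, hb, hbl⟩ := hTC
      refine noWalk _ ?_ hwch ⟨a, ha, by rw [hwh, hm1h]; exact hal⟩
        ⟨b, hb, by rw [hwl]; exact hbl⟩ ?_
      · intro h
        have h0 : m₁ = [] := (List.append_eq_nil_iff.mp h).1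
        rw [h0] at hm1l; simp at hm1l
      · intro v hv hvS
        rcases List.mem_append.mp hv with h1 | h2
        · have hveq : v = lsB i := hBonly i v (hm1pre.subset h1) (hSB v hvS)
          have h3 : y = lsB i := hm1last (lsB i) (hlsB i).1 (by rw [← hveq]; exact h1)
          exact hyS₀ (by rw [h3, ← hveq]; exact hvS)
        · have hv2 : v ∈ PC j₀ := List.mem_of_mem_tail h2
          have hveq : v = hdC j₀ := hConly j₀ v hv2 (hSC v hvS)
          rw [hj₀] at hveq
          exact hyS₀ (by rw [← hveq]; exact hvS)
    -- the matching σ between endpoints of PB and starts of PC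
    set t : Fin k → V := fun i => if lsB i = x then y else lsB i with htdef
    have ht_ap : ∀ a, t a = if lsB a = x then y else lsB a := fun a => by rw [htdef]
    have htC : ∀ i, t i ∈ C := by
      intro i
      rw [ht_ap]
      by_cases h : lsB i = x
      · rw [if_pos h]; exact hyC
      · rw [if_neg h]
        rcases Finset.mem_union.mp (hlsB i).2 with h1 | h1
        · exact hSC _ h1
        · exact absurd (Finset.mem_singleton.mp h1) h
    have hS₀_of_ne : ∀ i, lsB i ≠ x → lsB i ∈ S₀ := by
      intro i h
      rcases Finset.mem_union.mp (hlsB i).2 with h1 | h1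
      · exact h1
      · exact absurd (Finset.mem_singleton.mp h1) h
    have ht_inj : Function.Injective t := by
      intro i j hij
      rw [ht_ap, ht_ap] at hij
      by_cases hi : lsB i = x <;> by_cases hj : lsB j = x
      · exact hlsB_inj (by rw [hi, hj])
      · rw [if_pos hi, if_neg hj] at hij
        exact absurd (by rw [hij]; exact hS₀_of_ne j hj) hyS₀
      · rw [if_neg hi, if_pos hj] at hij
        exact absurd (by rw [← hij]; exact hS₀_of_ne i hi) hyS₀
      · rw [if_neg hi, if_neg hj] at hij
        exact hlsB_inj hij
    choose σ hσ using fun i => himgC (t i) (htC i)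
    have hσ_inj : Function.Injective σ := fun i j h => ht_inj (by rw [← hσ i, ← hσ j, h])
    -- the glued paths
    have hQdir : ∀ i, DirectPath E A T
        (PB i ++ (if lsB i = x then PC (σ i) else (PC (σ i)).tail)) := by
      intro i
      obtain ⟨hneB, hchB, hndB, hAB, -, hAonlyB, -⟩ := hPB.1 i
      obtain ⟨hneC, hchC, hndC, -, hTC, -, hTonlyC⟩ := hPC.1 (σ i)
      by_cases hix : lsB i = x
      · rw [if_pos hix]
        have hyhd : (PC (σ i)).head? = some y := by
          rw [(hhdC (σ i)).1, hσ i, ht_ap, if_pos hix]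
        have hlast : (PB i).getLast? = some x := by rw [(hlsB i).1, hix]
        obtain ⟨hwch, hwh, hwl⟩ := glueWalk2 hlast hyhd hxy (hchB.imp hE'sub) (hchC.imp hE'sub)
        obtain ⟨a, ha, hal⟩ := hAB
        obtain ⟨b, hb, hbl⟩ := hTC
        refine ⟨?_, hwch, ?_, ⟨a, ha, by rw [hwh]; exact hal⟩,
          ⟨b, hb, by rw [hwl]; exact hbl⟩, ?_, ?_⟩
        · intro h; exact hneB (List.append_eq_nil_iff.mp h).1
        · refine hndB.append hndC ?_
          intro v hv1 hv2
          have h1 := (hcross i (σ i) v hv1 hv2).1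
          rw [h1, hix] at hv2
          exact hxPC (σ i) hv2
        · intro v hv hvA
          rcases List.mem_append.mp hv with h1 | h2
          · rw [hwh]; exact hAonlyB v h1 hvA
          · exfalso
            obtain ⟨h3, h4⟩ := hA_C (σ i) v h2 hvA
            rw [hσ i, ht_ap, if_pos hix] at h3
            exact hyS₀ (by rw [← h3]; exact h4)
        · intro v hv hvT
          rcases List.mem_append.mp hv with h1 | h2
          · exfalso
            obtain ⟨h3, h4⟩ := hT_B i v h1 hvT
            rw [hix] at h3
            exact hxS₀ (by rw [← h3]; exact h4)
          · rw [hwl]; exact hTonlyC v h2 hvT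
      · rw [if_neg hix]
        have hsS₀ : lsB i ∈ S₀ := hS₀_of_ne i hix
        have hshd : (PC (σ i)).head? = some (lsB i) := by
          rw [(hhdC (σ i)).1, hσ i, ht_ap, if_neg hix]
        obtain ⟨hwch, hwh, hwl⟩ := glueWalk (hlsB i).1 hshd (hchB.imp hE'sub) (hchC.imp hE'sub)
        obtain ⟨a, ha, hal⟩ := hAB
        obtain ⟨b, hb, hbl⟩ := hTC
        have hMcons : PC (σ i) = lsB i :: (PC (σ i)).tail := eq_cons_of_head? hshd
        have hndM := hndC
        rw [hMcons, List.nodup_cons] at hndM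
        refine ⟨?_, hwch, ?_, ⟨a, ha, by rw [hwh]; exact hal⟩,
          ⟨b, hb, by rw [hwl]; exact hbl⟩, ?_, ?_⟩
        · intro h; exact hneB (List.append_eq_nil_iff.mp h).1
        · refine hndB.append (hndC.sublist (List.tail_sublist _)) ?_
          intro v hv1 hv2
          have hv2' : v ∈ PC (σ i) := List.mem_of_mem_tail hv2
          have h1 := (hcross i (σ i) v hv1 hv2').1
          rw [h1] at hv2
          exact hndM.1 hv2
        · intro v hv hvA
          rcases List.mem_append.mp hv with h1 | h2
          · rw [hwh]; exact hAonlyB v h1 hvA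
          · exfalso
            have h2' : v ∈ PC (σ i) := List.mem_of_mem_tail h2
            obtain ⟨h3, -⟩ := hA_C (σ i) v h2' hvA
            rw [hσ i, ht_ap, if_neg hix] at h3
            rw [h3] at h2
            exact hndM.1 h2
        · intro v hv hvT
          rcases List.mem_append.mp hv with h1 | h2
          · obtain ⟨h3, h4⟩ := hT_B i v h1 hvT
            rw [hwl]
            have hmem : lsB i ∈ PC (σ i) := by
              rw [hMcons]; exact mem_cons_self
            have h5 := hTonlyC (lsB i) hmem (by rw [← h3]; exact hvT)
            rw [h5, h3]
          · rw [hwl]; exact hTonlyC v (List.mem_of_mem_tail h2) hvT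
    refine ⟨fun i => PB i ++ (if lsB i = x then PC (σ i) else (PC (σ i)).tail),
      hQdir, ?_⟩
    intro i j hij v hv hv'
    have hmem : ∀ (a : Fin k) (w : V),
        w ∈ PB a ++ (if lsB a = x then PC (σ a) else (PC (σ a)).tail) →
        w ∈ PB a ∨ w ∈ PC (σ a) := by
      intro a w hw
      rcases List.mem_append.mp hw with h1 | h2
      · exact Or.inl h1
      · right
        by_cases hax : lsB a = x
        · rw [if_pos hax] at h2; exact h2
        · rw [if_neg hax] at h2; exact List.mem_of_mem_tail h2
    have hBC : ∀ (a b : Fin k), v ∈ PB a → v ∈ PC (σ b) → a = b := by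
      intro a b h1 h2
      obtain ⟨ha, hb, hc⟩ := hcross a (σ b) v h1 h2
      rw [hσ b, ht_ap] at hb
      by_cases hbx : lsB b = x
      · rw [if_pos hbx] at hb
        exact absurd (by rw [← hb]; exact hc) hyS₀
      · rw [if_neg hbx] at hb
        exact hlsB_inj (by rw [← ha, ← hb])
    rcases hmem i v hv with h1 | h1 <;> rcases hmem j v hv' with h2 | h2
    · exact hPB.2 i j hij v h1 h2
    · exact hij (hBC i j h1 h2)
    · exact hij (hBC j i h2 h1).symm
    · exact hPC.2 (σ i) (σ j) (fun h => hij (hσ_inj h)) v h1 h2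

end MengerAux

/-- Menger's theorem (vertex version between node sets): the maximum size of an
(A–T)-linking equals the minimum cardinality of an (A,T)-separator. -/
theorem menger_linking_separator {V : Type} [Fintype V] [DecidableEq V]
    (E : V → V → Prop) (A T : Set V) :
    ∃ p : ℕ,
      (∃ P : Fin p → List V, Linking E A T p P) ∧
      (∀ q (P : Fin q → List V), Linking E A T q P → q ≤ p) ∧
      (∃ S : Finset V, IsSeparator E A T ↑S ∧ S.card = p) ∧
      (∀ S : Finset V, IsSeparator E A T ↑S → p ≤ S.card) := by
  refine ⟨MengerAux.minSep E A T, ?_, ?_, ?_, ?_⟩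
  · exact MengerAux.core _ E le_rfl A T
  · intro q P hL
    obtain ⟨S, hS, hcard⟩ := MengerAux.exists_minSep_sep E A T
    rw [← hcard]
    exact MengerAux.linking_le hL hS
  · exact MengerAux.exists_minSep_sep E A T
  · exact fun S hS => MengerAux.minSep_le hS
end

section
/- Let G be a finite directed graph with node sets V1, V2 such that every node of G lies on some direct (V1–V2)-path. If a node v ∈ V1 is not contained in every minimum (V1,V2)-separator, then there exists a maximum (V1–V2)-linking one of whose paths starts at v. -/
/-!
If `v` lies on a path of a maximum linking, that path starts at `v`, since direct paths meet
`A` only at their first node. Otherwise take a direct path `ℓ` from `v`. By maximality `ℓ` meets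
the linking; if `u` is its first node on a linking path `P j`, replacing `P j` by the part of `ℓ`
up to `u` followed by the part of `P j` from `u` on gives a maximum linking with a path
starting at `v`.
-/

theorem List.exists_eq_append_cons_of_first {α : Type} (Q : α → Prop) {l : List α}
    (h : ∃ x ∈ l, Q x) : ∃ pre u suf, l = pre ++ u :: suf ∧ Q u ∧ ∀ y ∈ pre, ¬ Q y := by
  classical
  obtain ⟨u, hu⟩ := Option.isSome_iff_exists.1
    (List.find?_isSome (p := fun x => decide (Q x)).2 (by simpa using h))
  obtain ⟨hQ, pre, suf, rfl, hpre⟩ := List.find?_eq_some_iff_append.1 hu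
  exact ⟨pre, u, suf, rfl, by simpa using hQ, fun y hy => by simpa using hpre y hy⟩

variable {V : Type} {E : V → V → Prop} {A T : Set V}

namespace DirectPath

theorem head?_eq_of_mem {l : List V} (hl : DirectPath E A T l) {v : V} (hvl : v ∈ l)
    (hvA : v ∈ A) : l.head? = some v :=
  hl.2.2.2.2.2.1 v hvl hvA

theorem splice {pre suf α β : List V} {u : V}
    (hℓ : DirectPath E A T (pre ++ u :: suf)) (hm : DirectPath E A T (α ++ u :: β))
    (hpre : pre ≠ []) (hdisj : pre.Disjoint (u :: β)) :
    DirectPath E A T (pre ++ u :: β) := by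
  obtain ⟨-, hℓc, hℓn, ⟨a, haA, hℓh⟩, -, hℓA, hℓT⟩ := hℓ
  obtain ⟨-, hmc, hmn, -, ⟨b, hbT, hml⟩, hmA, hmT⟩ := hm
  replace hℓc := List.isChain_append.1 hℓc
  replace hmc := List.isChain_append.1 hmc
  rw [List.nodup_append'] at hℓn hmn
  have hhead : ∀ s : List V, (pre ++ s).head? = (pre ++ u :: suf).head? := fun s => by
    rw [List.head?_append_of_ne_nil _ hpre, List.head?_append_of_ne_nil _ hpre]
  have hlast : (pre ++ u :: β).getLast? = (α ++ u :: β).getLast? := by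
    rw [List.getLast?_append_cons, List.getLast?_append_cons]
  refine ⟨by simp, ?_, ?_, ⟨a, haA, (hhead _).trans hℓh⟩, ⟨b, hbT, hlast.trans hml⟩, ?_, ?_⟩
  · exact List.isChain_append.2 ⟨hℓc.1, hmc.2.1, hℓc.2.2⟩
  · rw [List.nodup_append']
    exact ⟨hℓn.1, hmn.2.1, hdisj⟩
  · intro w hw hwA
    rcases List.mem_append.1 hw with hw | hw
    · exact (hhead _).trans (hℓA w (List.mem_append_left _ hw) hwA)
    · have hmw := hmA w (List.mem_append_right _ hw) hwA
      cases α with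
      | nil =>
        obtain rfl : u = w := by simpa using hmw
        have hℓu := (hhead (u :: suf)).symm.trans (hℓA u (by simp) hwA)
        rw [List.head?_append_of_ne_nil _ hpre] at hℓu
        exact absurd (by simp) (hℓn.2.2 (List.mem_of_mem_head? hℓu))
      | cons c α =>
        obtain rfl : c = w := by simpa using hmw
        exact (hmn.2.2 (by simp) hw).elim
  · intro w hw hwT
    rcases List.mem_append.1 hw with hw | hw
    · have hℓw := hℓT w (List.mem_append_left _ hw) hwT
      rw [List.getLast?_append_cons] at hℓw
      exact absurd (List.mem_of_mem_getLast? hℓw) (hℓn.2.2 hw)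
    · exact hlast.trans (hmT w (List.mem_append_right _ hw) hwT)

end DirectPath

namespace Linking

variable {p : ℕ} {P : Fin p → List V}

theorem cons (hP : Linking E A T p P) {ℓ : List V} (hℓ : DirectPath E A T ℓ)
    (hdisj : ∀ i, ∀ x ∈ ℓ, x ∉ P i) : Linking E A T (p + 1) (Fin.cons ℓ P) := by
  refine ⟨Fin.cases hℓ hP.1, fun i j hij x hxi hxj => ?_⟩
  cases i using Fin.cases <;> cases j using Fin.cases
  · exact hij rfl
  · exact hdisj _ x hxi hxj
  · exact hdisj _ x hxj hxi
  · exact hP.2 _ _ (fun h => hij (congrArg Fin.succ h)) x hxi hxj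

theorem update (hP : Linking E A T p P) (j : Fin p) {L : List V} (hL : DirectPath E A T L)
    (hdisj : ∀ k ≠ j, ∀ x ∈ L, x ∉ P k) : Linking E A T p (Function.update P j L) := by
  refine ⟨fun i => ?_, fun i k hik x hxi hxk => ?_⟩
  · rcases eq_or_ne i j with rfl | hij
    · simpa using hL
    · simpa [hij] using hP.1 i
  · rcases eq_or_ne k j with rfl | hkj
    · rw [Function.update_of_ne hik] at hxi
      rw [Function.update_self] at hxk
      exact hdisj i hik x hxk hxi
    rw [Function.update_of_ne hkj] at hxk
    rcases eq_or_ne i j with rfl | hij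
    · rw [Function.update_self] at hxi
      exact hdisj k hkj x hxi hxk
    · rw [Function.update_of_ne hij] at hxi
      exact hP.2 i k hik x hxi hxk

theorem exists_reroute (hP : Linking E A T p P) {ℓ : List V} (hℓ : DirectPath E A T ℓ) {v : V}
    (hv : ℓ.head? = some v) (hvP : ∀ i, v ∉ P i) (hmeet : ∃ x ∈ ℓ, ∃ i, x ∈ P i) :
    ∃ P' : Fin p → List V, Linking E A T p P' ∧ ∃ i, (P' i).head? = some v := by
  obtain ⟨pre, u, suf, rfl, ⟨j, hu⟩, hpre⟩ := List.exists_eq_append_cons_of_first _ hmeet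
  obtain ⟨α, β, hPj⟩ := List.append_of_mem hu
  have hpre_ne : pre ≠ [] := by
    rintro rfl
    obtain rfl : u = v := by simpa using hv
    exact hvP j hu
  have hL : DirectPath E A T (pre ++ u :: β) :=
    hℓ.splice (hPj ▸ hP.1 j) hpre_ne fun _ hx hxj =>
      hpre _ hx ⟨j, hPj ▸ List.mem_append_right α hxj⟩
  refine ⟨Function.update P j (pre ++ u :: β), hP.update j hL fun k hkj x hx hxk => ?_, j, ?_⟩
  · rcases List.mem_append.1 hx with hx | hx
    · exact hpre x hx ⟨k, hxk⟩
    · exact hP.2 j k hkj.symm x (hPj ▸ List.mem_append_right α hx) hxk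
  · rwa [Function.update_self, List.head?_append_of_ne_nil _ hpre_ne,
      ← List.head?_append_of_ne_nil _ hpre_ne]

end Linking

theorem exists_max_linking_starting_at_general {V : Type}
    (E : V → V → Prop) (A T : Set V)
    (hcover : ∀ v : V, ∃ l, DirectPath E A T l ∧ v ∈ l)
    (p : ℕ)
    (hmax₁ : ∃ P : Fin p → List V, Linking E A T p P)
    (hmax₂ : ∀ q (P : Fin q → List V), Linking E A T q P → q ≤ p)
    (v : V) (hv : v ∈ A) :
    ∃ P : Fin p → List V, Linking E A T p P ∧ ∃ i, (P i).head? = some v := by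
  obtain ⟨P, hP⟩ := hmax₁
  by_cases hvP : ∃ i, v ∈ P i
  · obtain ⟨i, hi⟩ := hvP
    exact ⟨P, hP, i, (hP.1 i).head?_eq_of_mem hi hv⟩
  obtain ⟨ℓ, hℓ, hvℓ⟩ := hcover v
  have hmeet : ∃ x ∈ ℓ, ∃ i, x ∈ P i := by
    by_contra! hdisj
    have := hmax₂ _ _ (hP.cons hℓ fun i x hx => hdisj x hx i)
    omega
  exact hP.exists_reroute hℓ (hℓ.head?_eq_of_mem hvℓ hv) (not_exists.1 hvP) hmeet

/-- If every node lies on a direct (A–T)-path and `v ∈ A` is not contained in every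
minimum (A,T)-separator, then there exists a maximum (A–T)-linking one of whose
paths starts at `v`. -/
theorem exists_max_linking_starting_at {V : Type} [Fintype V] [DecidableEq V]
    (E : V → V → Prop) (A T : Set V)
    (hcover : ∀ v : V, ∃ l, DirectPath E A T l ∧ v ∈ l)
    (p : ℕ)
    (hmax₁ : ∃ P : Fin p → List V, Linking E A T p P)
    (hmax₂ : ∀ q (P : Fin q → List V), Linking E A T q P → q ≤ p)
    (v : V) (hv : v ∈ A)
    (hnot : ¬ ∀ S : Finset V, IsSeparator E A T ↑S →
      (∀ S' : Finset V, IsSeparator E A T ↑S' → S.card ≤ S'.card) → v ∈ S) :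
    ∃ P : Fin p → List V, Linking E A T p P ∧ ∃ i, (P i).head? = some v :=
  exists_max_linking_starting_at_general E A T hcover p hmax₁ hmax₂ v hv
end

section
/- If the transfer matrix T(s) = C(sI−A)^{-1}B has normal rank p (i.e., the system is functional output controllable), then the system is also point-wise output controllable, i.e., rank(C[B, AB, …, A^{n-1}B]) = p. -/
set_option synthInstance.maxHeartbeats 1000000
set_option maxHeartbeats 1000000

open Polynomial Matrix

/-- The transfer matrix `C (sI - A)⁻¹ B` as a matrix over the field `ℝ(s)` of
rational functions. -/
noncomputable def transferMatrix {n m p : ℕ} (A : Matrix (Fin n) (Fin n) ℝ)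
    (B : Matrix (Fin n) (Fin m) ℝ) (C : Matrix (Fin p) (Fin n) ℝ) :
    Matrix (Fin p) (Fin m) (RatFunc ℝ) :=
  C.map (algebraMap ℝ (RatFunc ℝ)) *
    (Matrix.diagonal (fun _ : Fin n => (RatFunc.X : RatFunc ℝ)) -
      A.map (algebraMap ℝ (RatFunc ℝ)))⁻¹ *
    B.map (algebraMap ℝ (RatFunc ℝ))

/-- Functional output controllability: from zero initial state, every smooth output
trajectory on `[0, T]` is realizable by a smooth input. -/
def FunctionalOutputControllable {n m p : ℕ} (A : Matrix (Fin n) (Fin n) ℝ)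
    (B : Matrix (Fin n) (Fin m) ℝ) (C : Matrix (Fin p) (Fin n) ℝ) : Prop :=
  ∀ T : ℝ, 0 < T → ∀ ytil : ℝ → Fin p → ℝ, ContDiff ℝ (⊤ : ℕ∞) ytil →
    ∃ u : ℝ → Fin m → ℝ, ContDiff ℝ (⊤ : ℕ∞) u ∧
      ∃ x : ℝ → Fin n → ℝ, x 0 = 0 ∧
        (∀ t, HasDerivAt x (A.mulVec (x t) + B.mulVec (u t)) t) ∧
        ∀ t ∈ Set.Icc (0 : ℝ) T, C.mulVec (x t) = ytil t

/-- The controllability matrix `[B, AB, …, A^{n-1}B]`, indexed by block. -/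
noncomputable def ctrbMatrix {n m : ℕ} (A : Matrix (Fin n) (Fin n) ℝ)
    (B : Matrix (Fin n) (Fin m) ℝ) : Matrix (Fin n) (Fin n × Fin m) ℝ :=
  Matrix.of fun i q => (A ^ (q.1 : ℕ) * B) i q.2

/-- Point-wise output controllability: from zero initial state, any output value
can be reached at any positive time. -/
def PointwiseOutputControllable {n m p : ℕ} (A : Matrix (Fin n) (Fin n) ℝ)
    (B : Matrix (Fin n) (Fin m) ℝ) (C : Matrix (Fin p) (Fin n) ℝ) : Prop :=
  ∀ T : ℝ, 0 < T → ∀ yT : Fin p → ℝ,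
    ∃ u : ℝ → Fin m → ℝ, Continuous u ∧
      ∃ x : ℝ → Fin n → ℝ, x 0 = 0 ∧
        (∀ t, HasDerivAt x (A.mulVec (x t) + B.mulVec (u t)) t) ∧
        C.mulVec (x T) = yT

/-- The resolvent `(sI - A)⁻¹` over `ℝ(s)` is a linear combination (with
coefficients in `ℝ(s)`) of the powers `A^k`, `k < n`. -/
lemma inv_expand {n : ℕ} (A : Matrix (Fin n) (Fin n) ℝ) :
    ∃ f : Fin n → RatFunc ℝ,
      (Matrix.diagonal (fun _ : Fin n => (RatFunc.X : RatFunc ℝ)) -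
        A.map (algebraMap ℝ (RatFunc ℝ)))⁻¹ =
      ∑ k : Fin n, f k • (A.map (algebraMap ℝ (RatFunc ℝ))) ^ (k : ℕ) := by
  rcases Nat.eq_zero_or_pos n with hn | hn
  · subst hn
    exact ⟨0, by ext i _; exact i.elim0⟩
  classical
  set φ := algebraMap ℝ (RatFunc ℝ) with hφ
  set A' := A.map φ with hA'
  set s : RatFunc ℝ := RatFunc.X with hs
  set M := Matrix.diagonal (fun _ : Fin n => s) - A' with hM
  set q := A.charpoly with hq
  set p := q.map φ with hp
  have hpcp : p = A'.charpoly := (Matrix.charpoly_map A φ).symm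
  have hqmonic : q.Monic := A.charpoly_monic
  have hqdeg : q.natDegree = n := by
    rw [hq, A.charpoly_natDegree_eq_dim, Fintype.card_fin]
  set c := p.eval s with hc
  have hcform : c = algebraMap ℝ[X] (RatFunc ℝ) q := by
    rw [hc, hp, eval_map, hs, ← RatFunc.algebraMap_X (K := ℝ)]
    rw [hφ, RatFunc.algebraMap_eq_C, ← RatFunc.algebraMap_comp_C]
    rw [← hom_eval₂ q Polynomial.C (algebraMap ℝ[X] (RatFunc ℝ)) Polynomial.X, eval₂_C_X]
  have hcne : c ≠ 0 := by
    rw [hcform]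
    exact (map_ne_zero_iff _ (RatFunc.algebraMap_injective ℝ)).mpr hqmonic.ne_zero
  obtain ⟨g, hg⟩ := X_sub_C_dvd_sub_C_eval (a := s) (p := p)
  have haev : (c • (1 : Matrix (Fin n) (Fin n) (RatFunc ℝ))) = M * aeval A' g := by
    have h0 : aeval A' p = 0 := by rw [hpcp]; exact A'.aeval_self_charpoly
    have h1 := congrArg (aeval A') hg
    rw [map_sub, h0, _root_.map_mul, map_sub, aeval_X, aeval_C, aeval_C] at h1
    have halg : ∀ x : RatFunc ℝ,
        algebraMap (RatFunc ℝ) (Matrix (Fin n) (Fin n) (RatFunc ℝ)) x = x • 1 := fun x =>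
      Algebra.algebraMap_eq_smul_one x
    rw [halg, halg] at h1
    have hM' : M = s • 1 - A' := by rw [hM, smul_one_eq_diagonal]
    rw [hM']
    have h2 : -(c • (1 : Matrix (Fin n) (Fin n) (RatFunc ℝ))) = (A' - s • 1) * aeval A' g := by
      simpa [hc, zero_sub] using h1
    have h3 : (s • 1 - A') * aeval A' g = -((A' - s • 1) * aeval A' g) := by
      rw [← neg_sub A' (s • 1), neg_mul]
    rw [h3, ← h2, neg_neg]
  have hmul : M * (c⁻¹ • aeval A' g) = 1 := by
    rw [Matrix.mul_smul, ← haev, smul_smul, inv_mul_cancel₀ hcne, one_smul]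
  have hinv : M⁻¹ = c⁻¹ • aeval A' g := Matrix.inv_eq_right_inv hmul
  have hgne : g ≠ 0 := by
    rintro rfl
    rw [map_zero, Matrix.mul_zero] at haev
    have h3 := congrFun (congrFun haev ⟨0, hn⟩) ⟨0, hn⟩
    simp at h3
    exact hcne h3
  have hpdeg : p.natDegree = n := by
    rw [hp, hqmonic.natDegree_map, hqdeg]
  have hdeg : g.natDegree < n := by
    have h1 : (p - Polynomial.C c).natDegree = n := by rw [natDegree_sub_C, hpdeg]
    have h2 : ((X - Polynomial.C s) * g).natDegree = 1 + g.natDegree := by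
      rw [natDegree_mul (X_sub_C_ne_zero s) hgne, natDegree_X_sub_C]
    rw [hc] at h1
    rw [hg, h2] at h1
    omega
  refine ⟨fun k => c⁻¹ * g.coeff (k : ℕ), ?_⟩
  rw [hinv, aeval_eq_sum_range' hdeg, Finset.smul_sum,
    ← Fin.sum_univ_eq_sum_range (fun i => c⁻¹ • (g.coeff i • A' ^ i)) n]
  exact Finset.sum_congr rfl fun k _ => by rw [smul_smul]

/-- Functional output controllability (normal rank of the transfer matrix equal to
`p`) implies point-wise output controllability, i.e. `rank (C K) = p`. -/
theorem pointwise_of_functional {n m p : ℕ}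
    (A : Matrix (Fin n) (Fin n) ℝ) (B : Matrix (Fin n) (Fin m) ℝ)
    (C : Matrix (Fin p) (Fin n) ℝ)
    (h : (transferMatrix A B C).rank = p) :
    (C * ctrbMatrix A B).rank = p := by
  classical
  set φ := algebraMap ℝ (RatFunc ℝ) with hφ
  obtain ⟨f, hf⟩ := inv_expand A
  have hTeq : transferMatrix A B C =
      ∑ k : Fin n, f k • ((C * (A ^ (k : ℕ) * B)).map φ) := by
    have hpow : ∀ k : ℕ, (A ^ k).map φ = (A.map φ) ^ k := fun k => by
      simpa [RingHom.mapMatrix_apply] using map_pow φ.mapMatrix A k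
    have hmap : ∀ k : ℕ, (C * (A ^ k * B)).map φ = C.map φ * (A.map φ) ^ k * B.map φ := by
      intro k
      rw [Matrix.map_mul (f := φ), Matrix.map_mul (f := φ), hpow k, ← Matrix.mul_assoc]
    unfold transferMatrix
    rw [← hφ, hf, Matrix.mul_sum, Matrix.sum_mul]
    refine Finset.sum_congr rfl fun k _ => ?_
    rw [Matrix.mul_smul, Matrix.smul_mul, hmap (k : ℕ)]
  have hT : LinearIndependent (RatFunc ℝ) fun i => transferMatrix A B C i := by
    rw [linearIndependent_iff_card_eq_finrank_span, Fintype.card_fin]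
    unfold Set.finrank
    exact h.symm.trans (Matrix.rank_eq_finrank_span_row _)
  have hCK : LinearIndependent ℝ fun i => (C * ctrbMatrix A B) i := by
    by_contra hdep
    obtain ⟨g, hsum, i0, hi0⟩ := Fintype.not_linearIndependent_iff.mp hdep
    have hzero : ∀ (k : Fin n) (j : Fin m),
        ∑ i, g i * (C * (A ^ (k : ℕ) * B)) i j = 0 := by
      intro k j
      have h1 := congrFun hsum (k, j)
      simpa [Finset.sum_apply, ctrbMatrix, Matrix.mul_apply] using h1
    have key : ∑ i, φ (g i) • transferMatrix A B C i = 0 := by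
      funext j
      have expand : ∀ i : Fin p, transferMatrix A B C i j
          = ∑ k : Fin n, f k * φ ((C * (A ^ (k : ℕ) * B)) i j) := by
        intro i
        rw [hTeq]
        simp only [Matrix.sum_apply, Matrix.smul_apply, Matrix.map_apply, smul_eq_mul]
      calc (∑ i, φ (g i) • transferMatrix A B C i) j
          = ∑ i, φ (g i) * transferMatrix A B C i j := by
            simp [Finset.sum_apply, smul_eq_mul]
        _ = ∑ i, ∑ k, φ (g i) * (f k * φ ((C * (A ^ (k : ℕ) * B)) i j)) := by
            simp_rw [expand, Finset.mul_sum]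
        _ = ∑ k, ∑ i, φ (g i) * (f k * φ ((C * (A ^ (k : ℕ) * B)) i j)) := Finset.sum_comm
        _ = ∑ k : Fin n, f k * φ (∑ i, g i * (C * (A ^ (k : ℕ) * B)) i j) := by
            refine Finset.sum_congr rfl fun k _ => ?_
            rw [map_sum, Finset.mul_sum]
            refine Finset.sum_congr rfl fun i _ => ?_
            rw [_root_.map_mul]; ring
        _ = (0 : Fin m → RatFunc ℝ) j := by simp [hzero]
    have hz := Fintype.linearIndependent_iff.mp hT (fun i => φ (g i)) key i0
    exact hi0 (RingHom.injective φ (by simpa using hz))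
  simpa using hCK.rank_matrix
end

section
/- Let G be a finite directed graph with available set 𝒜 and target set 𝒯 of size p admitting an (𝒜–𝒯)-linking of size p. A node x ∈ 𝒜 is useless—meaning for every admissible solution D containing x, D \ {x} is still an admissible solution—if and only if there is no directed path in G from x to a node of 𝒯. -/
open List in
lemma walk_clean {V : Type} {E : V → V → Prop} :
    ∀ (n : ℕ) (l : List V), l.length ≤ n → l.Chain' E →
    ∃ l' : List V, l'.Chain' E ∧ l'.Nodup ∧ l'.head? = l.head? ∧ l'.getLast? = l.getLast? ∧
      ∀ v ∈ l', v ∈ l := by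
  intro n
  induction n with
  | zero =>
    intro l hl _
    have : l = [] := List.eq_nil_of_length_eq_zero (Nat.le_zero.mp hl)
    exact ⟨[], by simp [this, List.Chain']⟩
  | succ n ih =>
    intro l hl hc
    match l with
    | [] => exact ⟨[], by simp [List.Chain']⟩
    | a :: rest =>
      by_cases ha : a ∈ rest
      · obtain ⟨u, w, rfl⟩ := List.append_of_mem ha
        have hre : (a :: (u ++ a :: w)) = (a :: u) ++ (a :: w) := by simp
        have hsub : (a :: w).Chain' E := by
          rw [hre] at hc
          exact (List.isChain_append.mp hc).2.1
        obtain ⟨l', h1, h2, h3, h4, h5⟩ := ih (a :: w) (by simp at hl ⊢; omega) hsub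
        refine ⟨l', h1, h2, by simp [h3], ?_, ?_⟩
        · rw [h4, hre, List.getLast?_append_of_ne_nil _ (by simp)]
        · intro v hv
          have := h5 v hv
          simp at this ⊢
          tauto
      · obtain ⟨l', h1, h2, h3, h4, h5⟩ := ih rest (by simp at hl ⊢; omega) hc.tail
        refine ⟨a :: l', ?_, ?_, by simp, ?_, ?_⟩
        · refine List.isChain_cons.mpr ⟨?_, h1⟩
          intro y hy
          rw [h3] at hy
          exact (List.isChain_cons.mp hc).1 y hy
        · exact List.nodup_cons.mpr ⟨fun h => ha (h5 a h), h2⟩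
        · match rest, h4 with
          | [], h4 =>
            have : l' = [] := by simpa using List.head?_eq_none_iff.mp (by simpa using h3)
            simp [this]
          | b :: r, h4 =>
            have hl' : l' ≠ [] := by
              intro h; rw [h] at h3; simp at h3
            rw [show a :: l' = [a] ++ l' from rfl,
              List.getLast?_append_of_ne_nil _ hl', h4,
              show a :: b :: r = [a] ++ (b :: r) from rfl,
              List.getLast?_append_of_ne_nil _ (by simp)]
        · intro v hv
          rcases List.mem_cons.mp hv with h | h
          · simp [h]
          · simp [h5 v h]

lemma linking_head_mem_and_inj {V : Type} {E : V → V → Prop} {D T : Set V} {p : ℕ}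
    {P : Fin p → List V} (hP : Linking E D T p P) :
    ∃ H : Fin p → V, Function.Injective H ∧ ∀ i, H i ∈ D ∧ H i ∈ P i := by
  refine ⟨fun i => (P i).head (hP.1 i).1, ?_, ?_⟩
  · intro i j hij
    by_contra hne
    apply hP.2 i j hne _ (List.head_mem (hP.1 i).1)
    have hij2 : (P i).head (hP.1 i).1 = (P j).head (hP.1 j).1 := hij
    rw [hij2]
    exact List.head_mem (hP.1 j).1
  · intro i
    obtain ⟨a, haD, ha⟩ := (hP.1 i).2.2.2.1
    rw [List.head?_eq_head (hP.1 i).1] at ha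
    have heq : a = (P i).head (hP.1 i).1 := by simpa using ha.symm
    refine ⟨?_, List.head_mem _⟩
    show (P i).head (hP.1 i).1 ∈ D
    rw [← heq]
    exact haD

lemma no_linking_of_small {V : Type} [Fintype V] {E : V → V → Prop} {D T : Set V} {p : ℕ}
    (hD : D.ncard < p) {P : Fin p → List V} (hP : Linking E D T p P) : False := by
  obtain ⟨H, hinj, hmem⟩ := linking_head_mem_and_inj hP
  have h1 : Set.range H ⊆ D := Set.range_subset_iff.mpr fun i => (hmem i).1
  have h2 : (Set.range H).ncard = p := by
    rw [← Nat.card_coe_set_eq, Nat.card_range_of_injective hinj, Nat.card_eq_fintype_card,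
      Fintype.card_fin]
  have := Set.ncard_le_ncard h1 (Set.toFinite D)
  omega

lemma target_cover {V : Type} [Fintype V] {E : V → V → Prop} {A T : Set V} {p : ℕ}
    (hT : T.ncard = p) {P : Fin p → List V} (hP : Linking E A T p P) :
    ∀ b ∈ T, ∃ j, (P j).getLast? = some b := by
  have hne : ∀ i, P i ≠ [] := fun i => (hP.1 i).1
  set G : Fin p → V := fun i => (P i).getLast (hne i) with hG
  have hGlast : ∀ i, (P i).getLast? = some (G i) := fun i =>
    List.getLast?_eq_getLast_of_ne_nil (hne i)
  have hmem : ∀ i, G i ∈ T := by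
    intro i
    obtain ⟨b, hbT, hb⟩ := (hP.1 i).2.2.2.2.1
    rw [hGlast i] at hb
    have : b = G i := by simpa using hb.symm
    exact this ▸ hbT
  have hinj : Function.Injective G := by
    intro i j hij
    by_contra hne'
    apply hP.2 i j hne' _ (List.getLast_mem (hne i))
    have hij2 : (P i).getLast (hne i) = (P j).getLast (hne j) := hij
    rw [hij2]
    exact List.getLast_mem (hne j)
  have h2 : (Set.range G).ncard = p := by
    rw [← Nat.card_coe_set_eq, Nat.card_range_of_injective hinj, Nat.card_eq_fintype_card,
      Fintype.card_fin]
  have heq : Set.range G = T :=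
    Set.eq_of_subset_of_ncard_le (Set.range_subset_iff.mpr hmem) (by omega) (Set.toFinite T)
  intro b hb
  obtain ⟨j, hj⟩ := heq ▸ hb
  exact ⟨j, hj ▸ hGlast j⟩

lemma heads_small {V : Type} [Fintype V] [DecidableEq V] {p : ℕ} (hp : 1 ≤ p)
    (P : Fin p → List V) (hne : ∀ i, P i ≠ []) (j : Fin p) (D' : Set V)
    (hsub : D' ⊆ {v | ∃ m, m ≠ j ∧ (P m).head? = some v}) : D'.ncard < p := by
  classical
  set F : Finset V := (Finset.univ.erase j).image (fun m => (P m).head (hne m)) with hF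
  have h1 : D' ⊆ ↑F := by
    intro v hv
    obtain ⟨m, hm, hv⟩ := hsub hv
    rw [List.head?_eq_head (hne m)] at hv
    simp only [hF, Finset.coe_image, Set.mem_image, Finset.coe_erase, Set.mem_diff,
      Finset.mem_coe, Finset.mem_univ, true_and, Set.mem_singleton_iff]
    exact ⟨m, hm, by simpa using hv⟩
  have h2 : D'.ncard ≤ F.card := by
    rw [← Set.ncard_coe_finset]
    exact Set.ncard_le_ncard h1 (F.finite_toSet)
  have h3 : F.card ≤ (Finset.univ.erase j).card := Finset.card_image_le
  have h4 : (Finset.univ.erase j).card = p - 1 := by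
    rw [Finset.card_erase_of_mem (Finset.mem_univ j), Finset.card_univ, Fintype.card_fin]
  omega

/-- Classification of useless steering nodes: assuming a size-`p` (A–T)-linking
exists, a node `x ∈ A` is useless (removable from every admissible solution
containing it) iff there is no directed path from `x` to a node of `T`. -/
theorem useless_iff_no_path {V : Type} [Fintype V] [DecidableEq V]
    (E : V → V → Prop) (A T : Set V) (p : ℕ) (hT : T.ncard = p)
    (hex : ∃ P : Fin p → List V, Linking E A T p P)
    (x : V) (hx : x ∈ A) :
    ((∀ D : Set V, D ⊆ A → x ∈ D → (∃ P : Fin p → List V, Linking E D T p P) →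
        ∃ P : Fin p → List V, Linking E (D \ {x}) T p P) ↔
      ¬ ∃ l : List V, l ≠ [] ∧ l.Chain' E ∧ l.head? = some x ∧
        ∃ b ∈ T, l.getLast? = some b) := by
  classical
  obtain ⟨P, hP⟩ := hex
  constructor
  · rintro huse ⟨l0, hl0ne, hl0c, hl0x, b, hbT, hl0b⟩
    have hp1 : 1 ≤ p := by
      have := (Set.ncard_pos (Set.toFinite T)).mpr ⟨b, hbT⟩
      omega
    have hPne : ∀ i, P i ≠ [] := fun i => (hP.1 i).1
    by_cases hcase : ∃ k, x ∈ P k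
    · -- x already lies on a linking path, hence is its head
      obtain ⟨k, hk⟩ := hcase
      have hxhead : (P k).head? = some x := (hP.1 k).2.2.2.2.2.1 x hk hx
      set D : Set V := insert x {v | ∃ m, m ≠ k ∧ (P m).head? = some v} with hD
      have hDA : D ⊆ A := by
        rintro v (rfl | ⟨m, _, hv⟩)
        · exact hx
        · obtain ⟨a, haA, ha⟩ := (hP.1 m).2.2.2.1
          rw [ha] at hv
          exact (Option.some_injective _ hv).symm ▸ haA
      have hlink : Linking E D T p P := by
        refine ⟨fun i => ?_, hP.2⟩
        obtain ⟨h1, h2, h3, ⟨a, haA, ha⟩, h5, h6, h7⟩ := hP.1 i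
        refine ⟨h1, h2, h3, ⟨a, ?_, ha⟩, h5, ?_, h7⟩
        · by_cases hik : i = k
          · subst hik
            rw [hxhead] at ha
            exact (Option.some_injective _ ha).symm ▸ Set.mem_insert x _
          · exact Set.mem_insert_iff.mpr (Or.inr ⟨i, hik, ha⟩)
        · rintro v hv (rfl | ⟨m, hm, hvm⟩)
          · by_cases hik : i = k
            · subst hik; exact hxhead
            · exact absurd hk (hP.2 i k hik v hv)
          · have hvPm : v ∈ P m := List.mem_of_mem_head? (by rw [hvm]; rfl)
            by_cases hmi : m = i
            · subst hmi; exact hvm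
            · exact absurd hv (hP.2 m i hmi v hvPm)
      obtain ⟨P2, hP2⟩ := huse D hDA (Set.mem_insert x _) ⟨P, hlink⟩
      refine no_linking_of_small ?_ hP2
      refine heads_small hp1 P hPne k _ ?_
      rintro v ⟨hv, hvx⟩
      rcases hv with rfl | hv
      · exact absurd rfl hvx
      · exact hv
    · -- x lies on no linking path: reroute
      push_neg at hcase
      obtain ⟨l, hlc, hlnd, hlh, hll, hlsub⟩ := walk_clean l0.length l0 le_rfl hl0c
      rw [hl0x] at hlh
      rw [hl0b] at hll
      set q : V → Bool := fun v => !(decide (∃ k, v ∈ P k)) with hqdef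
      have hq : ∀ v, q v = true ↔ ∀ k, v ∉ P k := by intro v; simp [hqdef]
      set tW := l.takeWhile q with htWdef
      set dW := l.dropWhile q with hdWdef
      have hbU : ∃ k, b ∈ P k := by
        obtain ⟨m, hm⟩ := target_cover hT hP b hbT
        exact ⟨m, List.mem_of_mem_getLast? (by rw [hm]; rfl)⟩
      have hbl : b ∈ l := List.mem_of_mem_getLast? (by rw [hll]; rfl)
      have hdWne : dW ≠ [] := by
        intro h
        have h2 := List.dropWhile_eq_nil_iff.mp h b hbl
        obtain ⟨k, hk⟩ := hbU
        exact (hq b).mp h2 k hk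
      set w := dW.head hdWne with hwdef
      have hwU : ∃ k, w ∈ P k := by
        have := List.head_dropWhile_not q (l := l) hdWne
        simpa [hqdef] using this
      obtain ⟨j', hwP⟩ := hwU
      obtain ⟨s, t, hPj⟩ := List.append_of_mem hwP
      set L := tW ++ w :: t with hLdef
      have htWl : tW ++ dW = l := List.takeWhile_append_dropWhile (p := q) (l := l)
      have htWmem : ∀ v ∈ tW, ∀ k, v ∉ P k := fun v hv => (hq v).mp (List.mem_takeWhile_imp hv)
      have hxq : q x = true := (hq x).mpr hcase
      have hlcons : l = x :: l.tail := List.eq_cons_of_mem_head? (by rw [hlh]; rfl)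
      have htWcons : tW = x :: (l.tail.takeWhile q) := by
        rw [htWdef]
        conv_lhs => rw [hlcons]
        rw [List.takeWhile_cons_of_pos hxq]
      have htWne : tW ≠ [] := by rw [htWcons]; exact List.cons_ne_nil _ _
      have htWhead : tW.head? = some x := by rw [htWcons]; rfl
      have hLhead : L.head? = some x := by
        rw [hLdef, List.head?_append_of_ne_nil _ htWne, htWhead]
      have hcwt : (w :: t).Chain' E := by
        have := (hP.1 j').2.1
        rw [hPj] at this
        exact (List.isChain_append.mp this).2.1
      have hctW : tW.Chain' E := hlc.prefix (List.takeWhile_prefix q)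
      have hLc : L.Chain' E := by
        refine List.isChain_append.mpr ⟨hctW, hcwt, ?_⟩
        intro a ha y hy
        simp only [List.head?_cons, Option.mem_def, Option.some.injEq] at hy
        subst hy
        have hlc2 : (tW ++ dW).Chain' E := by rw [htWl]; exact hlc
        exact (List.isChain_append.mp hlc2).2.2 a ha w
          (by rw [List.head?_eq_head hdWne]; rfl)
      have hndtW : tW.Nodup := (List.takeWhile_sublist q).nodup hlnd
      have hwtPj : ∀ v ∈ w :: t, v ∈ P j' := by
        intro v hv
        rw [hPj]
        exact List.mem_append_right _ hv
      have hndwt : (w :: t).Nodup := by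
        refine List.Sublist.nodup ?_ (hP.1 j').2.2.1
        rw [hPj]
        exact List.sublist_append_right _ _
      have hLnd : L.Nodup := by
        refine hndtW.append hndwt ?_
        intro v hv1 hv2
        exact htWmem v hv1 j' (hwtPj v hv2)
      have hLne : L ≠ [] := by
        rw [hLdef]
        simp [htWne]
      have hLlast : L.getLast? = (P j').getLast? := by
        rw [hLdef, List.getLast?_append_of_ne_nil _ (List.cons_ne_nil w t), hPj,
          List.getLast?_append_of_ne_nil _ (List.cons_ne_nil w t)]
      obtain ⟨bj, hbjT, hbj⟩ := (hP.1 j').2.2.2.2.1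
      set D : Set V := insert x {v | ∃ m, m ≠ j' ∧ (P m).head? = some v} with hD
      have hDA : D ⊆ A := by
        rintro v (rfl | ⟨m, _, hv⟩)
        · exact hx
        · obtain ⟨a, haA, ha⟩ := (hP.1 m).2.2.2.1
          rw [ha] at hv
          exact (Option.some_injective _ hv).symm ▸ haA
      have hTU : ∀ v ∈ T, ∃ k, v ∈ P k := by
        intro v hv
        obtain ⟨m, hm⟩ := target_cover hT hP v hv
        exact ⟨m, List.mem_of_mem_getLast? (by rw [hm]; rfl)⟩
      have hLdir : DirectPath E D T L := by
        refine ⟨hLne, hLc, hLnd, ⟨x, Set.mem_insert x _, hLhead⟩,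
          ⟨bj, hbjT, by rw [hLlast]; exact hbj⟩, ?_, ?_⟩
        · rintro v hvL (rfl | ⟨m, hm, hvm⟩)
          · exact hLhead
          · have hvPm : v ∈ P m := List.mem_of_mem_head? (by rw [hvm]; rfl)
            rcases List.mem_append.mp hvL with h | h
            · exact absurd hvPm (htWmem v h m)
            · exact absurd (hwtPj v h) (hP.2 m j' hm v hvPm)
        · rintro v hvL hvT
          rcases List.mem_append.mp hvL with h | h
          · obtain ⟨k, hk⟩ := hTU v hvT
            exact absurd hk (htWmem v h k)
          · rw [hLlast]
            exact (hP.1 j').2.2.2.2.2.2 v (hwtPj v h) hvT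
      set Q : Fin p → List V := fun i => if i = j' then L else P i with hQ
      have hQj : Q j' = L := by simp [hQ]
      have hQi : ∀ i, i ≠ j' → Q i = P i := fun i hi => by simp [hQ, hi]
      have hQlink : Linking E D T p Q := by
        constructor
        · intro i
          by_cases hi : i = j'
          · rw [hi, hQj]; exact hLdir
          · rw [hQi i hi]
            obtain ⟨h1, h2, h3, ⟨a, haA, ha⟩, h5, h6, h7⟩ := hP.1 i
            refine ⟨h1, h2, h3, ⟨a, Set.mem_insert_iff.mpr (Or.inr ⟨i, hi, ha⟩), ha⟩,
              h5, ?_, h7⟩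
            rintro v hv (rfl | ⟨m, hm, hvm⟩)
            · exact absurd hv (hcase i)
            · have hvPm : v ∈ P m := List.mem_of_mem_head? (by rw [hvm]; rfl)
              by_cases hmi : m = i
              · subst hmi; exact hvm
              · exact absurd hv (hP.2 m i hmi v hvPm)
        · intro i j hij v hvi hvj
          by_cases hi : i = j'
          · rw [hi, hQj] at hvi
            rw [hQi j (fun h => hij (hi.trans h.symm))] at hvj
            rw [hi] at hij
            rcases List.mem_append.mp hvi with h | h
            · exact htWmem v h j hvj
            · exact hP.2 j' j hij v (hwtPj v h) hvj
          · rw [hQi i hi] at hvi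
            by_cases hj : j = j'
            · rw [hj, hQj] at hvj
              rw [hj] at hij
              rw [show (¬ i = j') = (j' ≠ i) from propext ⟨fun h => Ne.symm h, fun h => fun h2 => h h2.symm⟩] at hi
              rcases List.mem_append.mp hvj with h | h
              · exact htWmem v h i hvi
              · exact hP.2 j' i hi v (hwtPj v h) hvi
            · rw [hQi j hj] at hvj
              exact hP.2 i j hij v hvi hvj
      obtain ⟨P2, hP2⟩ := huse D hDA (Set.mem_insert x _) ⟨Q, hQlink⟩
      refine no_linking_of_small ?_ hP2
      refine heads_small hp1 P hPne j' _ ?_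
      rintro v ⟨hv, hvx⟩
      rcases hv with rfl | hv
      · exact absurd rfl hvx
      · exact hv
  · rintro hnp D hDA hxD ⟨P', hP'⟩
    have hxnot : ∀ i, x ∉ P' i := by
      intro i hxi
      have hhead := (hP'.1 i).2.2.2.2.2.1 x hxi hxD
      exact hnp ⟨P' i, (hP'.1 i).1, (hP'.1 i).2.1, hhead, (hP'.1 i).2.2.2.2.1⟩
    refine ⟨P', ?_, hP'.2⟩
    intro i
    obtain ⟨h1, h2, h3, ⟨a, haD, ha⟩, h5, h6, h7⟩ := hP'.1 i
    refine ⟨h1, h2, h3, ⟨a, ⟨haD, ?_⟩, ha⟩, h5, fun v hv hvD => h6 v hv hvD.1, h7⟩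
    intro hax
    rw [Set.mem_singleton_iff] at hax
    subst hax
    exact hxnot i (List.mem_of_mem_head? (by rw [ha]; rfl))
end

section
/- In the auxiliary node-split graph, every (𝒜,𝒯)-separator S of the original graph G induces an s–t cut of capacity |S| (consisting of the unit-capacity edges (x⁻, x⁺) for x ∈ S), and conversely every s–t cut of finite capacity consists only of node-splitting edges and corresponds to an (𝒜,𝒯)-separator of G of size equal to the cut capacity. -/
/-- Vertex set of the auxiliary node-split graph: `Sum.inl (x, false)` is `x⁻`,
`Sum.inl (x, true)` is `x⁺`, `Sum.inr false` is the source `s`, and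
`Sum.inr true` is the sink `t`. -/
abbrev AuxV (V : Type) : Type := (V × Bool) ⊕ Bool

open Classical in
/-- Capacities of the auxiliary graph: node-splitting edges `(x⁻, x⁺)` have
capacity 1; edges `(x⁺, y⁻)` for `E x y`, `(s, x⁻)` for `x ∈ A`, and `(x⁺, t)`
for `x ∈ T` have infinite capacity; all other pairs have capacity 0 (no edge). -/
noncomputable def auxCap {V : Type} (E : V → V → Prop) (A T : Set V) :
    AuxV V → AuxV V → ℕ∞
  | .inl (x, false), .inl (y, true) => if x = y then 1 else 0
  | .inl (x, true), .inl (y, false) => if E x y then ⊤ else 0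
  | .inr false, .inl (x, false) => if x ∈ A then ⊤ else 0
  | .inl (x, true), .inr true => if x ∈ T then ⊤ else 0
  | _, _ => 0

/-- An integer-valued `s`–`t` flow: capacity constraints on every pair, and flow
conservation at every node other than the source and the sink. -/
def IsFlow {V : Type} [Fintype V] (cap : AuxV V → AuxV V → ℕ∞)
    (f : AuxV V → AuxV V → ℕ) : Prop :=
  (∀ a b, (f a b : ℕ∞) ≤ cap a b) ∧
  ∀ v : AuxV V, v ≠ Sum.inr false → v ≠ Sum.inr true →
    ∑ a, f a v = ∑ b, f v b

/-- The value of a flow: total flow leaving the source. -/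
def flowValue {V : Type} [Fintype V] (f : AuxV V → AuxV V → ℕ) : ℕ :=
  ∑ b, f (Sum.inr false) b

open Classical in
/-- The capacity of the cut determined by a source set `W`. -/
noncomputable def cutCap {V : Type} [Fintype V] (cap : AuxV V → AuxV V → ℕ∞)
    (W : Set (AuxV V)) : ℕ∞ :=
  ∑ a, ∑ b, if a ∈ W ∧ b ∉ W then cap a b else 0


/-- reachable from A via a path whose vertices before the last avoid S -/
def Reach {V : Type} (E : V → V → Prop) (A : Set V) (S : Finset V) (x : V) : Prop :=
  ∃ l : List V, l.Chain' E ∧ (∃ a ∈ A, l.head? = some a) ∧ l.getLast? = some x ∧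
    ∀ v ∈ l.dropLast, v ∉ S

def sepW {V : Type} (E : V → V → Prop) (A : Set V) (S : Finset V) : Set (AuxV V) :=
  fun v => match v with
  | .inr false => True
  | .inr true => False
  | .inl (x, false) => Reach E A S x ∨ x ∈ S
  | .inl (x, true) => Reach E A S x ∧ x ∉ S

lemma part1 {V : Type} [Fintype V] [DecidableEq V]
    (E : V → V → Prop) (A T : Set V) (S : Finset V) (hsep : IsSeparator E A T ↑S) :
    Sum.inr false ∈ sepW E A S ∧ Sum.inr (true : Bool) ∉ sepW E A S ∧
      (∀ a b : AuxV V, (a ∈ sepW E A S ∧ b ∉ sepW E A S ∧ auxCap E A T a b ≠ 0) ↔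
        ∃ x ∈ S, a = Sum.inl (x, false) ∧ b = Sum.inl (x, true)) := by
  classical
  set W := sepW E A S with hW
  have hWs : Sum.inr false ∈ W := trivial
  have hWt : Sum.inr (true : Bool) ∉ W := fun h => h
  refine ⟨hWs, hWt, ?_⟩
  -- no vertex reachable-avoiding-S lies in T outside S
  have hreachT : ∀ x : V, Reach E A S x → x ∉ S → x ∉ T := by
    rintro x ⟨l, hch, hhead, hlast, hdrop⟩ hxS hxT
    have hl : l ≠ [] := by rintro rfl; simp at hlast
    obtain ⟨v, hv, hvS⟩ := hsep l hl hch hhead ⟨x, hxT, hlast⟩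
    rw [← List.dropLast_append_getLast hl] at hv
    rcases List.mem_append.mp hv with h | h
    · exact hdrop v h hvS
    · have : v = x := by
        have := List.mem_singleton.mp h
        rw [this]
        have := List.getLast?_eq_getLast hl
        rw [this] at hlast
        exact (Option.some.inj hlast)
      exact hxS (this ▸ hvS)
  -- reach propagates along edges
  have hreachE : ∀ x y : V, Reach E A S x → x ∉ S → E x y → Reach E A S y := by
    rintro x y ⟨l, hch, hhead, hlast, hdrop⟩ hxS hE
    have hl : l ≠ [] := by rintro rfl; simp at hlast
    refine ⟨l ++ [y], ?_, ?_, ?_, ?_⟩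
    · rw [List.Chain', List.isChain_append]
      refine ⟨hch, List.isChain_singleton y, ?_⟩
      intro u hu w hw
      obtain rfl : y = w := by simpa using hw
      rw [hlast] at hu
      obtain rfl : x = u := by simpa using hu
      exact hE
    · obtain ⟨a, haA, ha⟩ := hhead
      exact ⟨a, haA, by rw [List.head?_append, ha]; rfl⟩
    · exact List.getLast?_concat
    · rw [List.dropLast_concat]
      intro v hv
      rw [← List.dropLast_append_getLast hl] at hv
      rcases List.mem_append.mp hv with h | h
      · exact hdrop v h
      · have hvx : v = x := by
          have h' := List.mem_singleton.mp h
          rw [h']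
          have := List.getLast?_eq_getLast hl
          rw [this] at hlast
          exact Option.some.inj hlast
        rw [hvx]; exact hxS
  intro a b
  constructor
  · rintro ⟨haW, hbW, hne⟩
    rcases a with ⟨x, _ | _⟩ | _ | _ <;> rcases b with ⟨y, _ | _⟩ | _ | _ <;>
      simp only [auxCap] at hne <;> try (exact absurd rfl hne)
    · -- x⁻ → y⁺
      split at hne
      · next hxy =>
        subst hxy
        refine ⟨x, ?_, rfl, rfl⟩
        rcases haW with hR | hxS
        · by_contra hxS
          exact hbW ⟨hR, hxS⟩
        · exact hxS
      · exact absurd rfl hne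
    · -- x⁺ → y⁻
      split at hne
      · next hE =>
        obtain ⟨hRx, hxS⟩ := haW
        exact absurd (Or.inl (hreachE x y hRx hxS hE)) hbW
      · exact absurd rfl hne
    · -- x⁺ → t
      split at hne
      · next hT =>
        obtain ⟨hRx, hxS⟩ := haW
        exact absurd hT (hreachT x hRx hxS)
      · exact absurd rfl hne
    · -- s → y⁻
      split at hne
      · next hA =>
        refine absurd (Or.inl ⟨[y], List.isChain_singleton y, ⟨y, hA, rfl⟩, rfl, by simp⟩) hbW
      · exact absurd rfl hne
  · rintro ⟨x, hxS, rfl, rfl⟩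
    refine ⟨Or.inr hxS, ?_, by simp [auxCap]⟩
    rintro ⟨-, h⟩
    exact h hxS

lemma cutCap_eq_card {V : Type} [Fintype V] [DecidableEq V]
    (E : V → V → Prop) (A T : Set V) (W : Set (AuxV V)) (S : Finset V)
    (h : ∀ a b : AuxV V, (a ∈ W ∧ b ∉ W ∧ auxCap E A T a b ≠ 0) ↔
      ∃ x ∈ S, a = Sum.inl (x, false) ∧ b = Sum.inl (x, true)) :
    cutCap (auxCap E A T) W = S.card := by
  classical
  unfold cutCap
  have hterm : ∀ a b : AuxV V,
      (if a ∈ W ∧ b ∉ W then auxCap E A T a b else 0)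
        = ∑ x ∈ S, if a = Sum.inl (x, false) ∧ b = Sum.inl (x, true) then (1 : ℕ∞) else 0 := by
    intro a b
    by_cases hx : ∃ x ∈ S, a = Sum.inl (x, false) ∧ b = Sum.inl (x, true)
    · obtain ⟨x, hxS, ha, hb⟩ := hx
      have hl := (h a b).mpr ⟨x, hxS, ha, hb⟩
      rw [if_pos ⟨hl.1, hl.2.1⟩]
      subst ha hb
      have capval : auxCap E A T (Sum.inl (x, false)) (Sum.inl (x, true)) = 1 := by
        simp [auxCap]
      rw [capval, Finset.sum_eq_single_of_mem x hxS]
      · simp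
      · intro y hy hyx
        rw [if_neg]
        rintro ⟨h1, -⟩
        obtain rfl : x = y := by simpa using h1
        exact hyx rfl
    · rw [Finset.sum_eq_zero]
      · by_cases hW : a ∈ W ∧ b ∉ W
        · rw [if_pos hW]
          by_contra hc
          exact hx ((h a b).mp ⟨hW.1, hW.2, hc⟩)
        · rw [if_neg hW]
      · intro x hxS
        rw [if_neg]
        rintro ⟨ha, hb⟩
        exact hx ⟨x, hxS, ha, hb⟩
  simp_rw [hterm]
  rw [Finset.sum_congr rfl (fun a _ => Finset.sum_comm), Finset.sum_comm]
  have : ∀ x ∈ S, (∑ a : AuxV V, ∑ b : AuxV V,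
      if a = Sum.inl (x, false) ∧ b = Sum.inl (x, true) then (1 : ℕ∞) else 0) = 1 := by
    intro x _
    simp [ite_and, Finset.sum_ite_eq']
  rw [Finset.sum_congr rfl this]
  simp

open Classical in
lemma term_le_cutCap {V : Type} [Fintype V] (cap : AuxV V → AuxV V → ℕ∞)
    (W : Set (AuxV V)) (a b : AuxV V) :
    (if a ∈ W ∧ b ∉ W then cap a b else 0) ≤ cutCap cap W := by
  unfold cutCap
  have h1 : (if a ∈ W ∧ b ∉ W then cap a b else 0) ≤
      ∑ b', if a ∈ W ∧ b' ∉ W then cap a b' else 0 :=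
    Finset.single_le_sum (f := fun b' => if a ∈ W ∧ b' ∉ W then cap a b' else 0)
      (fun _ _ => zero_le) (Finset.mem_univ b)
  exact h1.trans (Finset.single_le_sum
    (f := fun a' => ∑ b', if a' ∈ W ∧ b' ∉ W then cap a' b' else 0)
    (fun _ _ => zero_le) (Finset.mem_univ a))

lemma part2 {V : Type} [Fintype V] [DecidableEq V]
    (E : V → V → Prop) (A T : Set V)
    (W : Set (AuxV V)) (hs : Sum.inr false ∈ W) (ht : Sum.inr true ∉ W)
    (hfin : cutCap (auxCap E A T) W ≠ ⊤) :
    ∃ S : Finset V, IsSeparator E A T ↑S ∧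
      (∀ a b : AuxV V, (a ∈ W ∧ b ∉ W ∧ auxCap E A T a b ≠ 0) ↔
        ∃ x ∈ S, a = Sum.inl (x, false) ∧ b = Sum.inl (x, true)) := by
  classical
  set S : Finset V := Finset.univ.filter
    (fun x => Sum.inl (x, false) ∈ W ∧ Sum.inl (x, true) ∉ W) with hS
  have hmem : ∀ x : V, x ∈ S ↔ (Sum.inl (x, false) ∈ W ∧ Sum.inl (x, true) ∉ W) := by
    intro x; simp [hS]
  have hchar : ∀ a b : AuxV V, (a ∈ W ∧ b ∉ W ∧ auxCap E A T a b ≠ 0) ↔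
      ∃ x ∈ S, a = Sum.inl (x, false) ∧ b = Sum.inl (x, true) := by
    intro a b
    constructor
    · rintro ⟨haW, hbW, hne⟩
      have hnt : auxCap E A T a b ≠ ⊤ := by
        intro hcap
        apply hfin
        have := term_le_cutCap (auxCap E A T) W a b
        rw [if_pos ⟨haW, hbW⟩, hcap] at this
        exact top_le_iff.mp this
      rcases a with ⟨x, _ | _⟩ | _ | _ <;> rcases b with ⟨y, _ | _⟩ | _ | _ <;>
        simp only [auxCap] at hne hnt <;> try (exact absurd rfl hne)
      · -- x⁻, y⁺
        split at hne
        · next hxy => subst hxy; exact ⟨x, (hmem x).mpr ⟨haW, hbW⟩, rfl, rfl⟩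
        · exact absurd rfl hne
      · split at hne
        · next h => rw [if_pos h] at hnt; exact absurd rfl hnt
        · exact absurd rfl hne
      · split at hne
        · next h => rw [if_pos h] at hnt; exact absurd rfl hnt
        · exact absurd rfl hne
      · split at hne
        · next h => rw [if_pos h] at hnt; exact absurd rfl hnt
        · exact absurd rfl hne
    · rintro ⟨x, hxS, rfl, rfl⟩
      obtain ⟨h1, h2⟩ := (hmem x).mp hxS
      refine ⟨h1, h2, ?_⟩
      simp [auxCap]
  have hstep : ∀ x y : V, E x y → Sum.inl (x, true) ∈ W → Sum.inl (y, false) ∈ W := by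
    intro x y hE hxW
    by_contra hyW
    obtain ⟨z, _, h1, _⟩ := (hchar _ _).mp ⟨hxW, hyW, by simp [auxCap, hE]⟩
    simp at h1
  have hup : ∀ x : V, x ∉ S → Sum.inl (x, false) ∈ W → Sum.inl (x, true) ∈ W := by
    intro x hxS hxW
    by_contra h
    exact hxS ((hmem x).mpr ⟨hxW, h⟩)
  refine ⟨S, ?_, hchar⟩
  intro l hl hchain ⟨a, haA, hahead⟩ ⟨b, hbT, hblast⟩
  by_contra hc
  push_neg at hc
  -- the first vertex's minus side is in W
  have haW : Sum.inl (a, false) ∈ W := by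
    by_contra h
    obtain ⟨z, _, h1, _⟩ := (hchar _ _).mp ⟨hs, h, by simp [auxCap, haA]⟩
    simp at h1
  have key : ∀ (l : List V), l.Chain' E → (∀ v ∈ l, v ∉ S) →
      ∀ a, l.head? = some a → Sum.inl (a, false) ∈ W →
      ∀ b, l.getLast? = some b → Sum.inl (b, true) ∈ W := by
    intro l
    induction l with
    | nil => intro _ _ a ha; simp at ha
    | cons u tl ih =>
      intro hch hnS a ha haW b hb
      have hau : a = u := by simpa using ha.symm
      subst hau
      have haS : a ∉ S := hnS a (List.mem_cons_self (a := a) (l := tl))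
      have haplus : Sum.inl (a, true) ∈ W := hup a haS haW
      cases tl with
      | nil =>
        obtain rfl : a = b := by simpa using hb
        exact haplus
      | cons v tl' =>
        have hE : E a v := (List.isChain_cons_cons.mp hch).1
        have hvW : Sum.inl (v, false) ∈ W := hstep a v hE haplus
        refine ih (List.isChain_cons_cons.mp hch).2 (fun w hw => hnS w (List.mem_cons_of_mem _ hw))
          v rfl hvW b ?_
        rw [List.getLast?_cons_cons] at hb
        exact hb
  have hin : ∀ v ∈ l, v ∉ S := fun v hv hvS => hc v hv hvS
  have hbW : Sum.inl (b, true) ∈ W := key l hchain hin a hahead haW b hblast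
  obtain ⟨z, _, _, h2⟩ := (hchar _ _).mp ⟨hbW, ht, by simp [auxCap, hbT]⟩
  simp at h2

/-- Separators of `G` correspond to finite `s`–`t` cuts of the auxiliary graph:
every (A,T)-separator `S` induces a cut of capacity `|S|` whose cut edges are
exactly the unit edges `(x⁻, x⁺)`, `x ∈ S`; conversely every finite-capacity cut
consists only of node-splitting edges and yields a separator of size equal to the
cut capacity. -/
theorem separator_cut_correspondence {V : Type} [Fintype V] [DecidableEq V]
    (E : V → V → Prop) (A T : Set V) :
    (∀ S : Finset V, IsSeparator E A T ↑S →
      ∃ W : Set (AuxV V), Sum.inr false ∈ W ∧ Sum.inr true ∉ W ∧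
        cutCap (auxCap E A T) W = S.card ∧
        (∀ a b : AuxV V, (a ∈ W ∧ b ∉ W ∧ auxCap E A T a b ≠ 0) ↔
          ∃ x ∈ S, a = Sum.inl (x, false) ∧ b = Sum.inl (x, true))) ∧
    (∀ W : Set (AuxV V), Sum.inr false ∈ W → Sum.inr true ∉ W →
      cutCap (auxCap E A T) W ≠ ⊤ →
      ∃ S : Finset V, IsSeparator E A T ↑S ∧
        (S.card : ℕ∞) = cutCap (auxCap E A T) W ∧
        (∀ a b : AuxV V, (a ∈ W ∧ b ∉ W ∧ auxCap E A T a b ≠ 0) ↔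
          ∃ x ∈ S, a = Sum.inl (x, false) ∧ b = Sum.inl (x, true))) := by
  constructor
  · intro S hsep
    obtain ⟨hs, ht, hchar⟩ := part1 E A T S hsep
    exact ⟨sepW E A S, hs, ht, cutCap_eq_card E A T _ S hchar, hchar⟩
  · intro W hs ht hfin
    obtain ⟨S, hsep, hchar⟩ := part2 E A T W hs ht hfin
    exact ⟨S, hsep, (cutCap_eq_card E A T W S hchar).symm, hchar⟩
end
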